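/- arXiv:1204.0486 — 14 statements merged into one kernel-verified Lean document; each statement's English description precedes it below -/
import Mathlib

section
/- There exist unique R-linear maps E, F : A → A such that p·a·p = E(a)·p and q·a·q = F(a)·q for all a ∈ A. Moreover, setting E⊥ = id − E and F⊥ = id − F, one has p·a = E(a)·p + F⊥(a)·q and q·a = E⊥(a)·p + F(a)·q for all a ∈ A. -/
open TensorProduct

/-- The linear map `A ⊗[R] B → X`, `a ⊗ b ↦ i a * j b`. -/
noncomputable def blendMul (R : Type*) {A B X : Type*} [CommRing R] [Ring A] [Ring B] [Ring X]
    [Algebra R A] [Algebra R B] [Algebra R X] (i : A →ₐ[R] X) (j : B →ₐ[R] X) :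
    A ⊗[R] B →ₗ[R] X :=
  (LinearMap.mul' R X).comp (TensorProduct.map i.toLinearMap j.toLinearMap)

noncomputable def proj1 (R A : Type*) [CommRing R] [Ring A] [Algebra R A] :
    A ⊗[R] (R × R) →ₗ[R] A :=
  TensorProduct.lift (((LinearMap.lsmul R A).comp (LinearMap.fst R R R)).flip)

noncomputable def proj2 (R A : Type*) [CommRing R] [Ring A] [Algebra R A] :
    A ⊗[R] (R × R) →ₗ[R] A :=
  TensorProduct.lift (((LinearMap.lsmul R A).comp (LinearMap.snd R R R)).flip)

lemma proj1_tmul {R A : Type*} [CommRing R] [Ring A] [Algebra R A] (a : A) (b : R × R) :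
    proj1 R A (a ⊗ₜ[R] b) = b.1 • a := by simp [proj1]

lemma proj2_tmul {R A : Type*} [CommRing R] [Ring A] [Algebra R A] (a : A) (b : R × R) :
    proj2 R A (a ⊗ₜ[R] b) = b.2 • a := by simp [proj2]

lemma tensor_decomp {R A : Type*} [CommRing R] [Ring A] [Algebra R A] (t : A ⊗[R] (R × R)) :
    t = (proj1 R A t) ⊗ₜ[R] ((1 : R), (0 : R)) + (proj2 R A t) ⊗ₜ[R] ((0 : R), (1 : R)) := by
  induction t using TensorProduct.induction_on with
  | zero => simp
  | tmul a b =>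
      obtain ⟨r, s⟩ := b
      rw [proj1_tmul, proj2_tmul]
      rw [TensorProduct.smul_tmul, TensorProduct.smul_tmul, ← TensorProduct.tmul_add]
      congr 1
      simp [Prod.smul_mk, Prod.ext_iff]
  | add x y hx hy =>
      rw [map_add, map_add, TensorProduct.add_tmul, TensorProduct.add_tmul]
      conv_lhs => rw [hx, hy]
      abel

theorem stmt1 {R A X : Type*} [CommRing R] [Ring A] [Ring X] [Algebra R A] [Algebra R X]
    (i : A →ₐ[R] X) (j : (R × R) →ₐ[R] X)
    (h1 : Function.Bijective (blendMul R i j)) (h2 : Function.Bijective (blendMul R j i))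
    (p q : X) (hp : p = j (1, 0)) (hq : q = j (0, 1)) :
    (∃! E : A →ₗ[R] A, ∀ a : A, p * i a * p = i (E a) * p) ∧
    (∃! F : A →ₗ[R] A, ∀ a : A, q * i a * q = i (F a) * q) ∧
    (∀ E F : A →ₗ[R] A, (∀ a : A, p * i a * p = i (E a) * p) →
      (∀ a : A, q * i a * q = i (F a) * q) →
      ∀ a : A, p * i a = i (E a) * p + i (a - F a) * q ∧
        q * i a = i (a - E a) * p + i (F a) * q) := by
  have hphi : ∀ (a : A) (b : R × R), blendMul R i j (a ⊗ₜ[R] b) = i a * j b := by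
    intro a b; simp [blendMul]
  have hpp : p * p = p := by rw [hp, ← map_mul]; congr 1; simp [Prod.mk_mul_mk]
  have hqq : q * q = q := by rw [hq, ← map_mul]; congr 1; simp [Prod.mk_mul_mk]
  have hqp : q * p = 0 := by
    rw [hp, hq, ← map_mul]
    have : ((0 : R), (1 : R)) * ((1 : R), (0 : R)) = (0 : R × R) := by
      simp [Prod.mk_mul_mk, Prod.ext_iff]
    rw [this, map_zero]
  have hpq : p * q = 0 := by
    rw [hp, hq, ← map_mul]
    have : ((1 : R), (0 : R)) * ((0 : R), (1 : R)) = (0 : R × R) := by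
      simp [Prod.mk_mul_mk, Prod.ext_iff]
    rw [this, map_zero]
  have hpq1 : p + q = 1 := by
    rw [hp, hq, ← map_add]
    have : ((1 : R), (0 : R)) + ((0 : R), (1 : R)) = (1 : R × R) := by
      simp [Prod.ext_iff]
    rw [this, map_one]
  -- injectivity of the decomposition
  have hinj : ∀ a b : A, i a * p + i b * q = 0 → a = 0 ∧ b = 0 := by
    intro a b hab
    have h0 : a ⊗ₜ[R] ((1 : R), (0 : R)) + b ⊗ₜ[R] ((0 : R), (1 : R)) = 0 := by
      apply h1.1
      rw [map_zero, map_add, hphi, hphi, ← hp, ← hq]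
      exact hab
    constructor
    · have := congrArg (proj1 R A) h0
      simpa [proj1_tmul] using this
    · have := congrArg (proj2 R A) h0
      simpa [proj2_tmul] using this
  have huniq : ∀ a b a' b' : A, i a * p + i b * q = i a' * p + i b' * q → a = a' ∧ b = b' := by
    intro a b a' b' h
    have h0 : i (a - a') * p + i (b - b') * q = 0 := by
      rw [map_sub, map_sub, sub_mul, sub_mul]
      rw [show i a * p - i a' * p + (i b * q - i b' * q)
          = (i a * p + i b * q) - (i a' * p + i b' * q) by abel, h, sub_self]
    obtain ⟨h1', h2'⟩ := hinj _ _ h0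
    exact ⟨sub_eq_zero.mp h1', sub_eq_zero.mp h2'⟩
  -- the linear map (a, b) ↦ i a * p + i b * q and its inverse
  set L : A × A →ₗ[R] X :=
    LinearMap.coprod ((LinearMap.mulRight R p).comp i.toLinearMap)
      ((LinearMap.mulRight R q).comp i.toLinearMap) with hL
  have hLapp : ∀ ab : A × A, L ab = i ab.1 * p + i ab.2 * q := by
    intro ab; simp [hL]
  have hLbij : Function.Bijective L := by
    constructor
    · intro x y hxy
      rw [hLapp, hLapp] at hxy
      obtain ⟨h1', h2'⟩ := huniq _ _ _ _ hxy
      exact Prod.ext h1' h2'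
    · intro x
      obtain ⟨t, ht⟩ := h1.2 x
      refine ⟨(proj1 R A t, proj2 R A t), ?_⟩
      rw [hLapp]
      have := tensor_decomp t
      rw [← ht]
      conv_rhs => rw [this]
      rw [map_add, hphi, hphi, ← hp, ← hq]
  set e := LinearEquiv.ofBijective L hLbij with he
  set D : A →ₗ[R] (A × A) :=
    ((e.symm : X →ₗ[R] (A × A)).comp ((LinearMap.mulLeft R p).comp i.toLinearMap)) with hD
  have hDapp : ∀ a : A, p * i a = i ((D a).1) * p + i ((D a).2) * q := by
    intro a
    have hX : L (D a) = p * i a := e.apply_symm_apply (p * i a)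
    rw [← hX, hLapp]
  -- decomposition of q * i a
  have hQapp : ∀ a : A, q * i a = i (a - (D a).1) * p + i (a - (D a).2) * q := by
    intro a
    have hia : i a = i a * p + i a * q := by rw [← mul_add, hpq1, mul_one]
    have hq' : q * i a = i a - p * i a := by
      rw [eq_sub_iff_add_eq, ← add_mul, add_comm q p, hpq1, one_mul]
    rw [hq', hDapp a]
    conv_lhs => rw [hia]
    rw [map_sub, map_sub, sub_mul, sub_mul]
    abel
  -- the canonical E and F
  set E0 : A →ₗ[R] A := (LinearMap.fst R A A).comp D with hE0
  set F0 : A →ₗ[R] A := LinearMap.id - (LinearMap.snd R A A).comp D with hF0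
  have hE0prop : ∀ a : A, p * i a * p = i (E0 a) * p := by
    intro a
    rw [hDapp a, add_mul, mul_assoc, mul_assoc, hpp, hqp, mul_zero, add_zero]
    simp [hE0]
  have hF0prop : ∀ a : A, q * i a * q = i (F0 a) * q := by
    intro a
    rw [hQapp a, add_mul, mul_assoc, mul_assoc, hqq, hpq, mul_zero, zero_add]
    simp [hF0]
  -- uniqueness from equality of * p parts (or * q parts)
  have huniqp : ∀ a a' : A, i a * p = i a' * p → a = a' := by
    intro a a' h
    have : i a * p + i (0 : A) * q = i a' * p + i (0 : A) * q := by rw [h]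
    exact (huniq _ _ _ _ this).1
  have huniqq : ∀ a a' : A, i a * q = i a' * q → a = a' := by
    intro a a' h
    have : i (0 : A) * p + i a * q = i (0 : A) * p + i a' * q := by rw [h]
    exact (huniq _ _ _ _ this).2
  refine ⟨⟨E0, hE0prop, ?_⟩, ⟨F0, hF0prop, ?_⟩, ?_⟩
  · intro E' hE'
    ext a
    exact huniqp _ _ (by rw [← hE' a, ← hE0prop a])
  · intro F' hF'
    ext a
    exact huniqq _ _ (by rw [← hF' a, ← hF0prop a])
  · intro E F hE hF a
    have hEa : E a = E0 a := huniqp _ _ (by rw [← hE a, ← hE0prop a])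
    have hFa : F a = F0 a := huniqq _ _ (by rw [← hF a, ← hF0prop a])
    have hF0a : F0 a = a - (D a).2 := by simp [hF0]
    constructor
    · have h2' : a - F a = (D a).2 := by rw [hFa, hF0a, sub_sub_cancel]
      rw [hEa, h2', hDapp a]
      simp [hE0]
    · rw [hQapp a, hEa, hFa, hF0a]
      simp [hE0]
end

section
/- For c₁ = a₁p + b₁q and c₂ = a₂p + b₂q in X, one has c₁c₂ = (a₁E(a₂) + b₁E⊥(a₂))p + (a₁F⊥(b₂) + b₁F(b₂))q. -/
open TensorProduct

theorem stmt2 {R A X : Type*} [CommRing R] [Ring A] [Ring X] [Algebra R A] [Algebra R X]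
    (i : A →ₐ[R] X) (j : (R × R) →ₐ[R] X)
    (h1 : Function.Bijective (blendMul R i j)) (h2 : Function.Bijective (blendMul R j i))
    (p q : X) (hp : p = j (1, 0)) (hq : q = j (0, 1))
    (E F : A →ₗ[R] A)
    (hE : ∀ a : A, p * i a * p = i (E a) * p)
    (hF : ∀ a : A, q * i a * q = i (F a) * q) :
    ∀ a₁ b₁ a₂ b₂ : A,
      (i a₁ * p + i b₁ * q) * (i a₂ * p + i b₂ * q) =
        i (a₁ * E a₂ + b₁ * (a₂ - E a₂)) * p + i (a₁ * (b₂ - F b₂) + b₁ * F b₂) * q := by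
  intro a₁ b₁ a₂ b₂
  have hpq : p + q = 1 := by
    rw [hp, hq, ← map_add]
    have h : ((1 : R), (0 : R)) + ((0 : R), (1 : R)) = (1 : R × R) := by
      simp [Prod.ext_iff]
    rw [h, map_one]
  have hp' : p = 1 - q := by rw [← hpq]; abel
  have hq' : q = 1 - p := by rw [← hpq]; abel
  have L1 : ∀ a b : A, i a * p * (i b * p) = i (a * E b) * p := by
    intro a b
    rw [map_mul, mul_assoc (i a), ← mul_assoc p, hE b, mul_assoc]
  have L4 : ∀ a b : A, i a * q * (i b * q) = i (a * F b) * q := by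
    intro a b
    rw [map_mul, mul_assoc (i a), ← mul_assoc q, hF b, mul_assoc]
  have L2 : ∀ a b : A, i a * p * (i b * q) = i (a * (b - F b)) * q := by
    intro a b
    have : p * (i b * q) = i (b - F b) * q := by
      rw [hp', sub_mul, one_mul, ← mul_assoc, hF b, map_sub, sub_mul]
    rw [map_mul, mul_assoc (i a), this, mul_assoc]
  have L3 : ∀ a b : A, i a * q * (i b * p) = i (a * (b - E b)) * p := by
    intro a b
    have : q * (i b * p) = i (b - E b) * p := by
      rw [hq', sub_mul, one_mul, ← mul_assoc, hE b, map_sub, sub_mul]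
    rw [map_mul, mul_assoc (i a), this, mul_assoc]
  rw [add_mul, mul_add, mul_add, L1, L2, L3, L4, map_add, map_add, add_mul, add_mul]
  abel
end

section
/- The maps E and F are idempotent operators, and for all a, b ∈ A: (i) E(ab) = E(a)E(b) + F⊥(a)E⊥(b); (ii) F(ab) = E⊥(a)F⊥(b) + F(a)F(b); (iii) E⊥(ab) = E⊥(a)E(b) + F(a)E⊥(b); (iv) F⊥(ab) = E(a)F⊥(b) + F⊥(a)F(b). -/
open TensorProduct

theorem stmt3 {R A X : Type*} [CommRing R] [Ring A] [Ring X] [Algebra R A] [Algebra R X]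
    (i : A →ₐ[R] X) (j : (R × R) →ₐ[R] X)
    (h1 : Function.Bijective (blendMul R i j)) (h2 : Function.Bijective (blendMul R j i))
    (p q : X) (hp : p = j (1, 0)) (hq : q = j (0, 1))
    (E F : A →ₗ[R] A)
    (hE : ∀ a : A, p * i a * p = i (E a) * p)
    (hF : ∀ a : A, q * i a * q = i (F a) * q) :
    (∀ a : A, E (E a) = E a) ∧ (∀ a : A, F (F a) = F a) ∧
    (∀ a b : A,
      E (a * b) = E a * E b + (a - F a) * (b - E b) ∧
      F (a * b) = (a - E a) * (b - F b) + F a * F b ∧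
      a * b - E (a * b) = (a - E a) * E b + F a * (b - E b) ∧
      a * b - F (a * b) = E a * (b - F b) + (a - F a) * F b) := by
  have happ : ∀ (a : A) (r : R × R), blendMul R i j (a ⊗ₜ r) = i a * j r := by
    intro a r; simp [blendMul]
  -- basic facts about p and q
  have hpp : p * p = p := by rw [hp, ← map_mul]; congr 1; simp [Prod.ext_iff]
  have hqq : q * q = q := by rw [hq, ← map_mul]; congr 1; simp [Prod.ext_iff]
  have hqp : q * p = 0 := by
    rw [hp, hq, ← map_mul]
    have : ((0,1) : R × R) * (1,0) = 0 := by simp [Prod.ext_iff]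
    rw [this, map_zero]
  have hpq : p * q = 0 := by
    rw [hp, hq, ← map_mul]
    have : ((1,0) : R × R) * (0,1) = 0 := by simp [Prod.ext_iff]
    rw [this, map_zero]
  have hpq1 : p + q = 1 := by
    rw [hp, hq, ← map_add]
    have : ((1,0) : R × R) + (0,1) = 1 := by simp [Prod.ext_iff]
    rw [this, map_one]
  -- projections of the tensor product
  set φ1 : A ⊗[R] (R × R) →ₗ[R] A :=
    (TensorProduct.rid R A).toLinearMap ∘ₗ TensorProduct.map LinearMap.id (LinearMap.fst R R R) with hφ1def
  set φ2 : A ⊗[R] (R × R) →ₗ[R] A :=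
    (TensorProduct.rid R A).toLinearMap ∘ₗ TensorProduct.map LinearMap.id (LinearMap.snd R R R) with hφ2def
  have hφ1 : ∀ (a : A) (r : R × R), φ1 (a ⊗ₜ r) = r.1 • a := by
    intro a r
    simp [hφ1def, TensorProduct.rid_tmul]
  have hφ2 : ∀ (a : A) (r : R × R), φ2 (a ⊗ₜ r) = r.2 • a := by
    intro a r
    simp [hφ2def, TensorProduct.rid_tmul]
  have hrep : ∀ t : A ⊗[R] (R × R),
      t = (φ1 t) ⊗ₜ[R] ((1,0) : R × R) + (φ2 t) ⊗ₜ[R] ((0,1) : R × R) := by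
    intro t
    induction t using TensorProduct.induction_on with
    | zero => simp
    | tmul a r =>
        rw [hφ1, hφ2, TensorProduct.smul_tmul, TensorProduct.smul_tmul, ← TensorProduct.tmul_add]
        congr 1
        simp [Prod.ext_iff]
    | add x y hx hy =>
        rw [map_add, map_add, add_tmul, add_tmul]
        conv_lhs => rw [hx, hy]
        abel
  -- existence of decompositions
  have decompX : ∀ x : X, ∃ u v : A, x = i u * p + i v * q := by
    intro x
    obtain ⟨t, ht⟩ := h1.2 x
    refine ⟨φ1 t, φ2 t, ?_⟩
    rw [← ht]
    conv_lhs => rw [hrep t]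
    rw [map_add, happ, happ, ← hp, ← hq]
  -- uniqueness of decompositions
  have uniq : ∀ u v u' v' : A, i u * p + i v * q = i u' * p + i v' * q → u = u' ∧ v = v' := by
    intro u v u' v' h
    have h' : blendMul R i j (u ⊗ₜ (1,0) + v ⊗ₜ (0,1))
        = blendMul R i j (u' ⊗ₜ (1,0) + v' ⊗ₜ (0,1)) := by
      rw [map_add, map_add, happ, happ, happ, happ, ← hp, ← hq]
      exact h
    have ht := h1.1 h'
    constructor
    · have h1' := congrArg φ1 ht
      rw [map_add, map_add, hφ1, hφ1, hφ1, hφ1] at h1'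
      simpa using h1'
    · have h2' := congrArg φ2 ht
      rw [map_add, map_add, hφ2, hφ2, hφ2, hφ2] at h2'
      simpa using h2'
  have hinjp : ∀ c c' : A, i c * p = i c' * p → c = c' := by
    intro c c' h
    exact (uniq c 0 c' 0 (by rw [map_zero]; simpa using h)).1
  have hinjq : ∀ c c' : A, i c * q = i c' * q → c = c' := by
    intro c c' h
    exact (uniq 0 c 0 c' (by rw [map_zero]; simpa using h)).2
  -- the key decompositions of p * i a and q * i a
  have key : ∀ a : A, p * i a = i (E a) * p + i (a - F a) * q
      ∧ q * i a = i (a - E a) * p + i (F a) * q := by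
    intro a
    obtain ⟨u, v, huv⟩ := decompX (p * i a)
    have hia : (i a : X) = i a * p + i a * q := by rw [← mul_add, hpq1, mul_one]
    have hqa : q * i a = i (a - u) * p + i (a - v) * q := by
      have hsum : p * i a + q * i a = i a := by rw [← add_mul, hpq1, one_mul]
      have hq' : q * i a = i a - (i u * p + i v * q) := by
        rw [← huv]; exact eq_sub_of_add_eq' hsum
      rw [hq', map_sub, map_sub, sub_mul, sub_mul]
      conv_lhs => rw [hia]
      abel
    have hu : u = E a := by
      apply hinjp
      have h1' : p * i a * p = i u * p := by
        rw [huv, add_mul, mul_assoc, mul_assoc, hpp, hqp, mul_zero, add_zero]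
      rw [← h1', hE]
    have hv : v = a - F a := by
      have h2' : q * i a * q = i (a - v) * q := by
        rw [hqa, add_mul, mul_assoc, mul_assoc, hpq, hqq, mul_zero, zero_add]
      have h3' : F a = a - v := hinjq _ _ ((hF a).symm.trans h2')
      rw [h3', sub_sub_cancel]
    constructor
    · rw [huv, hu, hv]
    · rw [hqa, hu, hv, sub_sub_cancel]
  -- idempotency
  have idemE : ∀ a : A, E (E a) = E a := by
    intro a
    apply hinjp
    have h' : p * i (E a) * p = i (E a) * p := by
      rw [mul_assoc, ← hE a, ← mul_assoc, ← mul_assoc, hpp, hE]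
    rw [← hE (E a), h']
  have idemF : ∀ a : A, F (F a) = F a := by
    intro a
    apply hinjq
    have h' : q * i (F a) * q = i (F a) * q := by
      rw [mul_assoc, ← hF a, ← mul_assoc, ← mul_assoc, hqq, hF]
    rw [← hF (F a), h']
  refine ⟨idemE, idemF, ?_⟩
  intro a b
  have hab1 : p * i (a * b)
      = i (E a * E b + (a - F a) * (b - E b)) * p
        + i (E a * (b - F b) + (a - F a) * F b) * q := by
    rw [map_mul, ← mul_assoc, (key a).1, add_mul, mul_assoc, mul_assoc, (key b).1, (key b).2]
    simp only [map_add, map_mul]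
    noncomm_ring
  have hab2 : q * i (a * b)
      = i ((a - E a) * E b + F a * (b - E b)) * p
        + i ((a - E a) * (b - F b) + F a * F b) * q := by
    rw [map_mul, ← mul_assoc, (key a).2, add_mul, mul_assoc, mul_assoc, (key b).1, (key b).2]
    simp only [map_add, map_mul]
    noncomm_ring
  obtain ⟨e1, e4⟩ := uniq _ _ _ _ (((key (a * b)).1.symm.trans hab1))
  obtain ⟨e3, e2⟩ := uniq _ _ _ _ (((key (a * b)).2.symm.trans hab2))
  exact ⟨e1, e2, e3, e4⟩
end

section
/- The map φ : A → A defined by φ(a) = E(a) + F(a) − a is multiplicative: φ(ab) = φ(a)φ(b) for all a, b ∈ A. -/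
open TensorProduct

theorem stmt4 {R A X : Type*} [CommRing R] [Ring A] [Ring X] [Algebra R A] [Algebra R X]
    (i : A →ₐ[R] X) (j : (R × R) →ₐ[R] X)
    (h1 : Function.Bijective (blendMul R i j)) (h2 : Function.Bijective (blendMul R j i))
    (p q : X) (hp : p = j (1, 0)) (hq : q = j (0, 1))
    (E F : A →ₗ[R] A)
    (hE : ∀ a : A, p * i a * p = i (E a) * p)
    (hF : ∀ a : A, q * i a * q = i (F a) * q) :
    ∀ a b : A, E (a * b) + F (a * b) - a * b = (E a + F a - a) * (E b + F b - b) := by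
  have hpq : p + q = 1 := by
    rw [hp, hq, ← map_add]
    have : ((1:R), (0:R)) + ((0:R), (1:R)) = 1 := by ext <;> simp
    rw [this, map_one]
  have hpp : p * p = p := by
    rw [hp, ← map_mul]
    congr 1; ext <;> simp
  have hqq : q * q = q := by
    rw [hq, ← map_mul]
    congr 1; ext <;> simp
  have hpq0 : p * q = 0 := by
    rw [hp, hq, ← map_mul]
    have : ((1:R), (0:R)) * ((0:R), (1:R)) = 0 := by ext <;> simp
    rw [this, map_zero]
  have hqp0 : q * p = 0 := by
    rw [hp, hq, ← map_mul]
    have : ((0:R), (1:R)) * ((1:R), (0:R)) = 0 := by ext <;> simp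
    rw [this, map_zero]
  -- first projection A ⊗ (R × R) → A
  set f1 : A ⊗[R] (R × R) →ₗ[R] A :=
    (TensorProduct.rid R A).toLinearMap.comp
      (TensorProduct.map LinearMap.id (LinearMap.fst R R R)) with hf1
  set f2 : A ⊗[R] (R × R) →ₗ[R] A :=
    (TensorProduct.rid R A).toLinearMap.comp
      (TensorProduct.map LinearMap.id (LinearMap.snd R R R)) with hf2
  -- uniqueness of decompositions x = i c * p + i d * q
  have cancel : ∀ c d : A, i c * p + i d * q = 0 → c = 0 ∧ d = 0 := by
    intro c d h
    have key : (c ⊗ₜ[R] (((1:R), (0:R)) : R × R) + d ⊗ₜ[R] (((0:R), (1:R)) : R × R)) = 0 := by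
      apply h1.injective
      rw [map_add, map_zero]
      simpa [blendMul, hp, hq] using h
    constructor
    · have := congrArg f1 key
      simpa [hf1] using this
    · have := congrArg f2 key
      simpa [hf2] using this
  have cancel' : ∀ c c' d d' : A, i c * p + i d * q = i c' * p + i d' * q → c = c' ∧ d = d' := by
    intro c c' d d' h
    have h0 : i (c - c') * p + i (d - d') * q = 0 := by
      rw [map_sub, map_sub, sub_mul, sub_mul]
      rw [← sub_eq_zero] at h
      linear_combination (norm := noncomm_ring) h
    obtain ⟨e1, e2⟩ := cancel _ _ h0
    exact ⟨sub_eq_zero.mp e1, sub_eq_zero.mp e2⟩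
  -- existence of decompositions
  have decomp : ∀ x : X, ∃ c d : A, x = i c * p + i d * q := by
    intro x
    obtain ⟨t, rfl⟩ := h1.surjective x
    induction t using TensorProduct.induction_on with
    | zero => exact ⟨0, 0, by simp⟩
    | tmul a r =>
      refine ⟨r.1 • a, r.2 • a, ?_⟩
      have hr : j r = r.1 • p + r.2 • q := by
        rw [hp, hq, ← map_smul, ← map_smul, ← map_add]
        congr 1; ext <;> simp
      simp [blendMul, hr, mul_add, mul_smul_comm, smul_mul_assoc]
    | add s t hs ht =>
      obtain ⟨c1, d1, e1⟩ := hs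
      obtain ⟨c2, d2, e2⟩ := ht
      refine ⟨c1 + c2, d1 + d2, ?_⟩
      rw [map_add, e1, e2, map_add, map_add, add_mul, add_mul]
      abel
  -- the key structural lemma
  have L : ∀ a : A, p * i a = i (E a) * p + i (a - F a) * q ∧
      q * i a = i (a - E a) * p + i (F a) * q := by
    intro a
    obtain ⟨c, d, h₁⟩ := decomp (p * i a)
    obtain ⟨c', d', h₂⟩ := decomp (q * i a)
    have hc : c = E a := by
      have e : i c * p + i (0:A) * q = i (E a) * p + i (0:A) * q := by
        have := hE a
        rw [h₁, add_mul, mul_assoc, mul_assoc, hpp, hqp0, mul_zero, add_zero] at this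
        simpa using this
      exact (cancel' _ _ _ _ e).1
    have hd' : d' = F a := by
      have e : i (0:A) * p + i d' * q = i (0:A) * p + i (F a) * q := by
        have := hF a
        rw [h₂, add_mul, mul_assoc, mul_assoc, hqq, hpq0, mul_zero, zero_add] at this
        simpa using this
      exact (cancel' _ _ _ _ e).2
    have hsum : i (c + c') * p + i (d + d') * q = i a * p + i a * q := by
      have : (p + q) * i a = i a * (p + q) := by rw [hpq, one_mul, mul_one]
      rw [add_mul, h₁, h₂, mul_add] at this
      rw [map_add, map_add, add_mul, add_mul]
      linear_combination (norm := noncomm_ring) this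
    obtain ⟨ec, ed⟩ := cancel' _ _ _ _ hsum
    rw [hc] at ec h₁
    rw [hd'] at ed h₂
    have hd : d = a - F a := eq_sub_of_add_eq ed
    have hc' : c' = a - E a := eq_sub_of_add_eq' ec
    rw [hd] at h₁
    rw [hc'] at h₂
    exact ⟨h₁, h₂⟩
  have hq_ibp : ∀ b : A, q * i b * p = i (b - E b) * p := by
    intro b
    rw [(L b).2, add_mul, mul_assoc, mul_assoc, hpp, hqp0, mul_zero, add_zero]
  have hp_ibq : ∀ b : A, p * i b * q = i (b - F b) * q := by
    intro b
    rw [(L b).1, add_mul, mul_assoc, mul_assoc, hpq0, hqq, mul_zero, zero_add]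
  have hEmul : ∀ a b : A, E (a * b) = E a * E b + (a - F a) * (b - E b) := by
    intro a b
    have e1 : i (E (a * b)) * p = i (E a * E b + (a - F a) * (b - E b)) * p := by
      calc i (E (a * b)) * p = p * i (a * b) * p := (hE (a * b)).symm
        _ = i (E a) * (p * i b * p) + i (a - F a) * (q * i b * p) := by
            rw [map_mul i a b, ← mul_assoc, (L a).1]; noncomm_ring
        _ = i (E a * E b + (a - F a) * (b - E b)) * p := by
            rw [hE b, hq_ibp b, map_add i, map_mul i, map_mul i]; noncomm_ring
    exact (cancel' _ _ 0 0 (by simpa using e1)).1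
  have hFmul : ∀ a b : A, F (a * b) = (a - E a) * (b - F b) + F a * F b := by
    intro a b
    have e1 : i (F (a * b)) * q = i ((a - E a) * (b - F b) + F a * F b) * q := by
      calc i (F (a * b)) * q = q * i (a * b) * q := (hF (a * b)).symm
        _ = i (a - E a) * (p * i b * q) + i (F a) * (q * i b * q) := by
            rw [map_mul i a b, ← mul_assoc, (L a).2]; noncomm_ring
        _ = i ((a - E a) * (b - F b) + F a * F b) * q := by
            rw [hF b, hp_ibq b, map_add i, map_mul i, map_mul i]; noncomm_ring
    exact (cancel' 0 0 _ _ (by simpa using e1)).2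
  intro a b
  rw [hEmul, hFmul]
  noncomm_ring
end

section
/- There exist unique linear maps E★, F★ : A → A such that pap = pE★(a) and qaq = qF★(a) for all a ∈ A; moreover ap = pE★(a) + qF★⊥(a) and aq = pE★⊥(a) + qF★(a) for all a ∈ A, where E★⊥ = id − E★ and F★⊥ = id − F★. -/
open TensorProduct

theorem stmt5 {R A X : Type*} [CommRing R] [Ring A] [Ring X] [Algebra R A] [Algebra R X]
    (i : A →ₐ[R] X) (j : (R × R) →ₐ[R] X)
    (h1 : Function.Bijective (blendMul R i j)) (h2 : Function.Bijective (blendMul R j i))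
    (p q : X) (hp : p = j (1, 0)) (hq : q = j (0, 1)) :
    (∃! Es : A →ₗ[R] A, ∀ a : A, p * i a * p = p * i (Es a)) ∧
    (∃! Fs : A →ₗ[R] A, ∀ a : A, q * i a * q = q * i (Fs a)) ∧
    (∀ Es Fs : A →ₗ[R] A, (∀ a : A, p * i a * p = p * i (Es a)) →
      (∀ a : A, q * i a * q = q * i (Fs a)) →
      ∀ a : A, i a * p = p * i (Es a) + q * i (a - Fs a) ∧
        i a * q = p * i (a - Es a) + q * i (Fs a)) := by
  classical
  have hpp : p * p = p := by
    rw [hp, ← map_mul]; norm_num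
  have hqq : q * q = q := by
    rw [hq, ← map_mul]; norm_num
  have hpq : p * q = 0 := by
    have h0 : ((1 : R), (0 : R)) * ((0 : R), (1 : R)) = 0 := by ext <;> simp
    rw [hp, hq, ← map_mul, h0, map_zero]
  have hqp : q * p = 0 := by
    have h0 : ((0 : R), (1 : R)) * ((1 : R), (0 : R)) = 0 := by ext <;> simp
    rw [hp, hq, ← map_mul, h0, map_zero]
  have hpq1 : p + q = 1 := by
    have h0 : ((1 : R), (0 : R)) + ((0 : R), (1 : R)) = 1 := by ext <;> simp
    rw [hp, hq, ← map_add, h0, map_one]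
  -- projections
  set π₁ : (R × R) ⊗[R] A →ₗ[R] A :=
    TensorProduct.lift ((LinearMap.lsmul R A).comp (LinearMap.fst R R R)) with hπ₁
  set π₂ : (R × R) ⊗[R] A →ₗ[R] A :=
    TensorProduct.lift ((LinearMap.lsmul R A).comp (LinearMap.snd R R R)) with hπ₂
  have hπ₁t : ∀ (r : R × R) (a : A), π₁ (r ⊗ₜ a) = r.1 • a := fun r a => rfl
  have hπ₂t : ∀ (r : R × R) (a : A), π₂ (r ⊗ₜ a) = r.2 • a := fun r a => rfl
  have hblend : ∀ (r : R × R) (a : A), blendMul R j i (r ⊗ₜ a) = j r * i a := by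
    intro r a
    simp [blendMul]
  have hjr : ∀ r : R × R, j r = r.1 • p + r.2 • q := by
    intro r
    have h0 : r = r.1 • ((1 : R), (0 : R)) + r.2 • ((0 : R), (1 : R)) := by ext <;> simp
    rw [hp, hq, ← map_smul, ← map_smul, ← map_add, ← h0]
  have key : ∀ t : (R × R) ⊗[R] A, blendMul R j i t = p * i (π₁ t) + q * i (π₂ t) := by
    intro t
    induction t using TensorProduct.induction_on with
    | zero => simp
    | tmul r a =>
        rw [hblend, hπ₁t, hπ₂t, hjr, add_mul, map_smul, map_smul]
        simp [mul_smul_comm, smul_mul_assoc]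
    | add x y hx hy =>
        simp only [map_add, hx, hy, mul_add]
        abel
  set e := LinearEquiv.ofBijective (blendMul R j i) h2 with he
  have hecoe : ∀ t, e t = blendMul R j i t := fun t => rfl
  have decomp : ∀ x : X, x = p * i (π₁ (e.symm x)) + q * i (π₂ (e.symm x)) := by
    intro x
    conv_lhs => rw [← e.apply_symm_apply x]
    rw [hecoe, key]
  have inj : ∀ c d : A, p * i c + q * i d = 0 → c = 0 ∧ d = 0 := by
    intro c d h
    have ht : blendMul R j i (((1 : R), (0 : R)) ⊗ₜ c + ((0 : R), (1 : R)) ⊗ₜ d) = 0 := by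
      rw [map_add, hblend, hblend, ← hp, ← hq, h]
    have h0 : (((1 : R), (0 : R)) ⊗ₜ c + ((0 : R), (1 : R)) ⊗ₜ d : (R × R) ⊗[R] A) = 0 :=
      h2.injective (by rw [ht, map_zero])
    constructor
    · have := congrArg π₁ h0
      simpa [hπ₁t] using this
    · have := congrArg π₂ h0
      simpa [hπ₂t] using this
  have inj' : ∀ c c' d d' : A, p * i c + q * i d = p * i c' + q * i d' → c = c' ∧ d = d' := by
    intro c c' d d' h
    have h0 : p * i (c - c') + q * i (d - d') = 0 := by
      rw [map_sub, map_sub, mul_sub, mul_sub]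
      rw [sub_add_sub_comm, h, sub_self]
    obtain ⟨h1', h2'⟩ := inj _ _ h0
    exact ⟨sub_eq_zero.mp h1', sub_eq_zero.mp h2'⟩
  -- The canonical maps
  set Es : A →ₗ[R] A :=
    π₁.comp (e.symm.toLinearMap.comp ((LinearMap.mulRight R p).comp i.toLinearMap)) with hEs
  set Gs : A →ₗ[R] A :=
    π₂.comp (e.symm.toLinearMap.comp ((LinearMap.mulRight R p).comp i.toLinearMap)) with hGs
  set Es' : A →ₗ[R] A :=
    π₁.comp (e.symm.toLinearMap.comp ((LinearMap.mulRight R q).comp i.toLinearMap)) with hEs'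
  set Fs : A →ₗ[R] A :=
    π₂.comp (e.symm.toLinearMap.comp ((LinearMap.mulRight R q).comp i.toLinearMap)) with hFs
  have hdp : ∀ a : A, i a * p = p * i (Es a) + q * i (Gs a) := by
    intro a; exact decomp (i a * p)
  have hdq : ∀ a : A, i a * q = p * i (Es' a) + q * i (Fs a) := by
    intro a; exact decomp (i a * q)
  have hEsp : ∀ a : A, p * i a * p = p * i (Es a) := by
    intro a
    rw [mul_assoc, hdp a, mul_add, ← mul_assoc, ← mul_assoc, hpp, hpq, zero_mul, add_zero]
  have hFsq : ∀ a : A, q * i a * q = q * i (Fs a) := by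
    intro a
    rw [mul_assoc, hdq a, mul_add, ← mul_assoc, ← mul_assoc, hqq, hqp, zero_mul, zero_add]
  -- uniqueness helpers
  have uniqp : ∀ (T T' : A →ₗ[R] A),
      (∀ a : A, p * i a * p = p * i (T a)) → (∀ a : A, p * i a * p = p * i (T' a)) → T = T' := by
    intro T T' hT hT'
    ext a
    have h0 : p * i (T a) + q * i 0 = p * i (T' a) + q * i 0 := by
      rw [← hT a, ← hT' a]
    exact (inj' _ _ _ _ h0).1
  have uniqq : ∀ (T T' : A →ₗ[R] A),
      (∀ a : A, q * i a * q = q * i (T a)) → (∀ a : A, q * i a * q = q * i (T' a)) → T = T' := by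
    intro T T' hT hT'
    ext a
    have h0 : p * i 0 + q * i (T a) = p * i 0 + q * i (T' a) := by
      rw [← hT a, ← hT' a]
    exact (inj' _ _ _ _ h0).2
  refine ⟨⟨Es, hEsp, fun T hT => uniqp T Es hT hEsp⟩,
    ⟨Fs, hFsq, fun T hT => uniqq T Fs hT hFsq⟩, ?_⟩
  intro E F hE hF a
  have hEeq : E = Es := uniqp E Es hE hEsp
  have hFeq : F = Fs := uniqq F Fs hF hFsq
  subst hEeq hFeq
  -- sum identity : i a = p * i a + q * i a and i a * p + i a * q = i a
  have hsum : p * i (Es a + Es' a) + q * i (Gs a + Fs a) = p * i a + q * i a := by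
    have h0 : i a * p + i a * q = p * i a + q * i a := by
      rw [← mul_add, hpq1, mul_one, ← add_mul, hpq1, one_mul]
    rw [map_add, map_add, mul_add, mul_add]
    calc p * i (Es a) + p * i (Es' a) + (q * i (Gs a) + q * i (Fs a))
        = (p * i (Es a) + q * i (Gs a)) + (p * i (Es' a) + q * i (Fs a)) := by abel
      _ = i a * p + i a * q := by rw [← hdp a, ← hdq a]
      _ = p * i a + q * i a := h0
  obtain ⟨hc, hd⟩ := inj' _ _ _ _ hsum
  have hGseq : Gs a = a - Fs a := eq_sub_of_add_eq hd
  have hEs'eq : Es' a = a - Es a := eq_sub_of_add_eq' hc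
  constructor
  · rw [hdp a, hGseq]
  · rw [hdq a, hEs'eq]
end

section
/- The map φ = E + F − id is an automorphism of the algebra A, with inverse φ★ = E★ + F★ − id. -/
open TensorProduct

theorem stmt7 {R A X : Type*} [CommRing R] [Ring A] [Ring X] [Algebra R A] [Algebra R X]
    (i : A →ₐ[R] X) (j : (R × R) →ₐ[R] X)
    (h1 : Function.Bijective (blendMul R i j)) (h2 : Function.Bijective (blendMul R j i))
    (p q : X) (hp : p = j (1, 0)) (hq : q = j (0, 1))
    (E F : A →ₗ[R] A)
    (hE : ∀ a : A, p * i a * p = i (E a) * p)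
    (hF : ∀ a : A, q * i a * q = i (F a) * q)
    (Es Fs : A →ₗ[R] A)
    (hEs : ∀ a : A, p * i a * p = p * i (Es a))
    (hFs : ∀ a : A, q * i a * q = q * i (Fs a)) :
    (∀ a : A, Es (E a + F a - a) + Fs (E a + F a - a) - (E a + F a - a) = a) ∧
    (∀ a : A, E (Es a + Fs a - a) + F (Es a + Fs a - a) - (Es a + Fs a - a) = a) ∧
    Function.Bijective (fun a : A => E a + F a - a) := by
  -- basic idempotent facts
  have hpq : p * q = 0 := by
    rw [hp, hq, ← map_mul]
    have h : ((1 : R), (0 : R)) * ((0 : R), (1 : R)) = 0 := by simp [Prod.ext_iff]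
    rw [h, map_zero]
  have hqp : q * p = 0 := by
    rw [hp, hq, ← map_mul]
    have h : ((0 : R), (1 : R)) * ((1 : R), (0 : R)) = 0 := by simp [Prod.ext_iff]
    rw [h, map_zero]
  have hpq1 : p + q = 1 := by
    rw [hp, hq, ← map_add]
    have h : ((1 : R), (0 : R)) + ((0 : R), (1 : R)) = 1 := by simp [Prod.ext_iff]
    rw [h, map_one]
  have hpp : p * p = p := by
    have h := mul_one p
    rw [← hpq1, mul_add, hpq, add_zero] at h
    exact h
  have hqq : q * q = q := by
    have h := mul_one q
    rw [← hpq1, mul_add, hqp, zero_add] at h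
    exact h
  have hp1 : p = 1 - q := by rw [← hpq1]; abel
  have hq1 : q = 1 - p := by rw [← hpq1]; abel
  -- injectivity helpers
  have J1 : ∀ x : A, i x * p = 0 → x = 0 := by
    intro x hx
    have h0 : x ⊗ₜ[R] ((1 : R), (0 : R)) = (0 : A ⊗[R] (R × R)) := by
      apply h1.injective
      rw [map_zero]
      simpa [blendMul, hp] using hx
    have h := congrArg (TensorProduct.lift
      (((LinearMap.lsmul R A).comp (LinearMap.fst R R R)).flip)) h0
    simpa using h
  have J2 : ∀ x : A, i x * q = 0 → x = 0 := by
    intro x hx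
    have h0 : x ⊗ₜ[R] ((0 : R), (1 : R)) = (0 : A ⊗[R] (R × R)) := by
      apply h1.injective
      rw [map_zero]
      simpa [blendMul, hq] using hx
    have h := congrArg (TensorProduct.lift
      (((LinearMap.lsmul R A).comp (LinearMap.snd R R R)).flip)) h0
    simpa using h
  have J3 : ∀ x : A, p * i x = 0 → x = 0 := by
    intro x hx
    have h0 : ((1 : R), (0 : R)) ⊗ₜ[R] x = (0 : (R × R) ⊗[R] A) := by
      apply h2.injective
      rw [map_zero]
      simpa [blendMul, hp] using hx
    have h := congrArg (TensorProduct.lift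
      ((LinearMap.lsmul R A).comp (LinearMap.fst R R R))) h0
    simpa using h
  have J4 : ∀ x : A, q * i x = 0 → x = 0 := by
    intro x hx
    have h0 : ((0 : R), (1 : R)) ⊗ₜ[R] x = (0 : (R × R) ⊗[R] A) := by
      apply h2.injective
      rw [map_zero]
      simpa [blendMul, hq] using hx
    have h := congrArg (TensorProduct.lift
      ((LinearMap.lsmul R A).comp (LinearMap.snd R R R))) h0
    simpa using h
  -- main lemmas
  have L1 : ∀ a : A, Es (E a + F a - a) = F a := by
    intro a
    have hx : p * i (Es (E a + F a - a) - F a) = 0 := by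
      rw [map_sub, mul_sub, sub_eq_zero, ← hEs, map_sub, map_add]
      have e1 : i (F a) * p = i (F a) - q * i a * q := by
        rw [hp1, mul_sub, mul_one, ← hF]
      calc p * (i (E a) + i (F a) - i a) * p
          = p * (i (E a) * p) + p * (i (F a) * p) - p * (i a * p) := by noncomm_ring
        _ = p * (p * i a * p) + p * (i (F a) - q * i a * q) - p * (i a * p) := by
            rw [← hE, e1]
        _ = p * i (F a) := by
            rw [show p * (p * i a * p) = p * i a * p by
              rw [← mul_assoc, ← mul_assoc, hpp]]
            rw [mul_sub, show p * (q * i a * q) = 0 by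
              rw [← mul_assoc, ← mul_assoc, hpq, zero_mul, zero_mul]]
            noncomm_ring
    exact sub_eq_zero.mp (J3 _ hx)
  have L2 : ∀ a : A, Fs (E a + F a - a) = E a := by
    intro a
    have hx : q * i (Fs (E a + F a - a) - E a) = 0 := by
      rw [map_sub, mul_sub, sub_eq_zero, ← hFs, map_sub, map_add]
      have e1 : i (E a) * q = i (E a) - p * i a * p := by
        rw [hq1, mul_sub, mul_one, ← hE]
      calc q * (i (E a) + i (F a) - i a) * q
          = q * (i (E a) * q) + q * (i (F a) * q) - q * (i a * q) := by noncomm_ring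
        _ = q * (i (E a) - p * i a * p) + q * (q * i a * q) - q * (i a * q) := by
            rw [← hF, e1]
        _ = q * i (E a) := by
            rw [show q * (q * i a * q) = q * i a * q by
              rw [← mul_assoc, ← mul_assoc, hqq]]
            rw [mul_sub, show q * (p * i a * p) = 0 by
              rw [← mul_assoc, ← mul_assoc, hqp, zero_mul, zero_mul]]
            noncomm_ring
    exact sub_eq_zero.mp (J4 _ hx)
  have L3 : ∀ a : A, E (Es a + Fs a - a) = Fs a := by
    intro a
    have hx : i (E (Es a + Fs a - a) - Fs a) * p = 0 := by
      rw [map_sub, sub_mul, sub_eq_zero, ← hE, map_sub, map_add]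
      have e1 : p * i (Fs a) = i (Fs a) - q * i a * q := by
        rw [hp1, sub_mul, one_mul, ← hFs]
      calc p * (i (Es a) + i (Fs a) - i a) * p
          = (p * i (Es a)) * p + (p * i (Fs a)) * p - (p * i a) * p := by noncomm_ring
        _ = (p * i a * p) * p + (i (Fs a) - q * i a * q) * p - (p * i a) * p := by
            rw [← hEs, e1]
        _ = i (Fs a) * p := by
            rw [show (p * i a * p) * p = (p * i a) * p by
              rw [mul_assoc, hpp]]
            rw [sub_mul, show (q * i a * q) * p = 0 by
              rw [mul_assoc, hqp, mul_zero]]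
            noncomm_ring
    exact sub_eq_zero.mp (J1 _ hx)
  have L4 : ∀ a : A, F (Es a + Fs a - a) = Es a := by
    intro a
    have hx : i (F (Es a + Fs a - a) - Es a) * q = 0 := by
      rw [map_sub, sub_mul, sub_eq_zero, ← hF, map_sub, map_add]
      have e1 : q * i (Es a) = i (Es a) - p * i a * p := by
        rw [hq1, sub_mul, one_mul, ← hEs]
      calc q * (i (Es a) + i (Fs a) - i a) * q
          = (q * i (Es a)) * q + (q * i (Fs a)) * q - (q * i a) * q := by noncomm_ring
        _ = (i (Es a) - p * i a * p) * q + (q * i a * q) * q - (q * i a) * q := by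
            rw [← hFs, e1]
        _ = i (Es a) * q := by
            rw [show (q * i a * q) * q = (q * i a) * q by
              rw [mul_assoc, hqq]]
            rw [sub_mul, show (p * i a * p) * q = 0 by
              rw [mul_assoc, hpq, mul_zero]]
            noncomm_ring
    exact sub_eq_zero.mp (J2 _ hx)
  refine ⟨fun a => by rw [L1 a, L2 a]; abel, fun a => by rw [L3 a, L4 a]; abel, ?_⟩
  constructor
  · exact Function.LeftInverse.injective
      (g := fun a : A => Es a + Fs a - a) (fun a => by simp only; rw [L1 a, L2 a]; abel)
  · exact Function.RightInverse.surjective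
      (g := fun a : A => Es a + Fs a - a) (fun a => by simp only; rw [L3 a, L4 a]; abel)
end

section
/- There exists a unique algebra automorphism Φ of X extending φ and satisfying Φ(p) = q and Φ(q) = p; explicitly Φ(ap + bq) = φ(b)p + φ(a)q. -/
open TensorProduct

lemma blendMul_tmul {R A B X : Type*} [CommRing R] [Ring A] [Ring B] [Ring X]
    [Algebra R A] [Algebra R B] [Algebra R X] (i : A →ₐ[R] X) (j : B →ₐ[R] X)
    (a : A) (b : B) : blendMul R i j (a ⊗ₜ[R] b) = i a * j b := by
  simp [blendMul]

lemma decompL {R A : Type*} [CommRing R] [Ring A] [Algebra R A] (t : A ⊗[R] (R × R)) :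
    ∃ a b : A, a ⊗ₜ[R] ((1:R),(0:R)) + b ⊗ₜ[R] ((0:R),(1:R)) = t := by
  induction t using TensorProduct.induction_on with
  | zero => exact ⟨0, 0, by simp⟩
  | tmul a r =>
    refine ⟨r.1 • a, r.2 • a, ?_⟩
    have hr : (r : R × R) = r.1 • ((1:R),(0:R)) + r.2 • ((0:R),(1:R)) := by
      ext <;> simp
    rw [TensorProduct.smul_tmul, TensorProduct.smul_tmul, ← TensorProduct.tmul_add, ← hr]
  | add x y hx hy =>
    obtain ⟨a, b, ha⟩ := hx
    obtain ⟨c, d, hc⟩ := hy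
    exact ⟨a + c, b + d, by rw [TensorProduct.add_tmul, TensorProduct.add_tmul, ← ha, ← hc]; abel⟩

lemma decompR {R A : Type*} [CommRing R] [Ring A] [Algebra R A] (t : (R × R) ⊗[R] A) :
    ∃ a b : A, ((1:R),(0:R)) ⊗ₜ[R] a + ((0:R),(1:R)) ⊗ₜ[R] b = t := by
  induction t using TensorProduct.induction_on with
  | zero => exact ⟨0, 0, by simp⟩
  | tmul r a =>
    refine ⟨r.1 • a, r.2 • a, ?_⟩
    have hr : (r : R × R) = r.1 • ((1:R),(0:R)) + r.2 • ((0:R),(1:R)) := by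
      ext <;> simp
    rw [← TensorProduct.smul_tmul, ← TensorProduct.smul_tmul, ← TensorProduct.add_tmul, ← hr]
  | add x y hx hy =>
    obtain ⟨a, b, ha⟩ := hx
    obtain ⟨c, d, hc⟩ := hy
    exact ⟨a + c, b + d, by rw [TensorProduct.tmul_add, TensorProduct.tmul_add, ← ha, ← hc]; abel⟩

lemma zeroL {R A : Type*} [CommRing R] [Ring A] [Algebra R A] {a b : A}
    (h : a ⊗ₜ[R] ((1:R),(0:R)) + b ⊗ₜ[R] ((0:R),(1:R)) = (0 : A ⊗[R] (R × R))) :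
    a = 0 ∧ b = 0 := by
  constructor
  · have := congrArg ((TensorProduct.rid R A).toLinearMap.comp
      (TensorProduct.map LinearMap.id (LinearMap.fst R R R))) h
    simpa using this
  · have := congrArg ((TensorProduct.rid R A).toLinearMap.comp
      (TensorProduct.map LinearMap.id (LinearMap.snd R R R))) h
    simpa using this

lemma zeroR {R A : Type*} [CommRing R] [Ring A] [Algebra R A] {a b : A}
    (h : ((1:R),(0:R)) ⊗ₜ[R] a + ((0:R),(1:R)) ⊗ₜ[R] b = (0 : (R × R) ⊗[R] A)) :
    a = 0 ∧ b = 0 := by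
  constructor
  · have := congrArg ((TensorProduct.lid R A).toLinearMap.comp
      (TensorProduct.map (LinearMap.fst R R R) LinearMap.id)) h
    simpa using this
  · have := congrArg ((TensorProduct.lid R A).toLinearMap.comp
      (TensorProduct.map (LinearMap.snd R R R) LinearMap.id)) h
    simpa using this

theorem stmt8 {R A X : Type*} [CommRing R] [Ring A] [Ring X] [Algebra R A] [Algebra R X]
    (i : A →ₐ[R] X) (j : (R × R) →ₐ[R] X)
    (h1 : Function.Bijective (blendMul R i j)) (h2 : Function.Bijective (blendMul R j i))
    (p q : X) (hp : p = j (1, 0)) (hq : q = j (0, 1))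
    (E F : A →ₗ[R] A)
    (hE : ∀ a : A, p * i a * p = i (E a) * p)
    (hF : ∀ a : A, q * i a * q = i (F a) * q) :
    (∃! Φ : X ≃ₐ[R] X, (∀ a : A, Φ (i a) = i (E a + F a - a)) ∧ Φ p = q ∧ Φ q = p) ∧
    (∀ Φ : X ≃ₐ[R] X, (∀ a : A, Φ (i a) = i (E a + F a - a)) → Φ p = q → Φ q = p →
      ∀ a b : A, Φ (i a * p + i b * q) = i (E b + F b - b) * p + i (E a + F a - a) * q) := by
  have hpq1 : p + q = 1 := by
    rw [hp, hq, ← map_add]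
    convert map_one j using 2
    ext <;> simp
  have hpq0 : p * q = 0 := by
    rw [hp, hq, ← map_mul]
    convert map_zero j using 2
    ext <;> simp
  have hqp0 : q * p = 0 := by
    rw [hp, hq, ← map_mul]
    convert map_zero j using 2
    ext <;> simp
  have hpp : p * p = p := by
    rw [hp, ← map_mul]
    congr 1
    ext <;> simp
  have hqq : q * q = q := by
    rw [hq, ← map_mul]
    congr 1
    ext <;> simp
  -- surjectivity and uniqueness of left/right decompositions
  have surjL : ∀ x : X, ∃ a b : A, i a * p + i b * q = x := by
    intro x
    obtain ⟨t, ht⟩ := h1.2 x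
    obtain ⟨a, b, rfl⟩ := decompL t
    refine ⟨a, b, ?_⟩
    rw [← ht, map_add, blendMul_tmul, blendMul_tmul, hp, hq]
  have surjR : ∀ x : X, ∃ a b : A, p * i a + q * i b = x := by
    intro x
    obtain ⟨t, ht⟩ := h2.2 x
    obtain ⟨a, b, rfl⟩ := decompR t
    refine ⟨a, b, ?_⟩
    rw [← ht, map_add, blendMul_tmul, blendMul_tmul, hp, hq]
  have injL : ∀ a b : A, i a * p + i b * q = 0 → a = 0 ∧ b = 0 := by
    intro a b h
    have h' : blendMul R i j (a ⊗ₜ[R] ((1:R),(0:R)) + b ⊗ₜ[R] ((0:R),(1:R))) = blendMul R i j 0 := by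
      rw [map_add, blendMul_tmul, blendMul_tmul, ← hp, ← hq, h, map_zero]
    exact zeroL (h1.1 h')
  have injR : ∀ a b : A, p * i a + q * i b = 0 → a = 0 ∧ b = 0 := by
    intro a b h
    have h' : blendMul R j i (((1:R),(0:R)) ⊗ₜ[R] a + ((0:R),(1:R)) ⊗ₜ[R] b) = blendMul R j i 0 := by
      rw [map_add, blendMul_tmul, blendMul_tmul, ← hp, ← hq, h, map_zero]
    exact zeroR (h2.1 h')
  have uniqL : ∀ a b c d : A, i a * p + i b * q = i c * p + i d * q → a = c ∧ b = d := by
    intro a b c d h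
    have h0 : i (a - c) * p + i (b - d) * q = 0 := by
      rw [map_sub, map_sub, sub_mul, sub_mul]
      rw [show i a * p - i c * p + (i b * q - i d * q)
        = i a * p + i b * q - (i c * p + i d * q) by abel, h, sub_self]
    obtain ⟨h1', h2'⟩ := injL _ _ h0
    exact ⟨sub_eq_zero.mp h1', sub_eq_zero.mp h2'⟩
  have uniqR : ∀ a b c d : A, p * i a + q * i b = p * i c + q * i d → a = c ∧ b = d := by
    intro a b c d h
    have h0 : p * i (a - c) + q * i (b - d) = 0 := by
      rw [map_sub, map_sub, mul_sub, mul_sub]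
      rw [show p * i a - p * i c + (q * i b - q * i d)
        = p * i a + q * i b - (p * i c + q * i d) by abel, h, sub_self]
    obtain ⟨h1', h2'⟩ := injR _ _ h0
    exact ⟨sub_eq_zero.mp h1', sub_eq_zero.mp h2'⟩
  have uniqLp : ∀ a b : A, i a * p = i b * p → a = b := by
    intro a b h
    exact (uniqL a 0 b 0 (by rw [map_zero, zero_mul, add_zero, add_zero, h])).1
  have uniqLq : ∀ a b : A, i a * q = i b * q → a = b := by
    intro a b h
    exact (uniqL 0 a 0 b (by rw [map_zero, zero_mul, zero_add, zero_add, h])).2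
  have uniqRp : ∀ a b : A, p * i a = p * i b → a = b := by
    intro a b h
    exact (uniqR a 0 b 0 (by rw [map_zero, mul_zero, add_zero, add_zero, h])).1
  have uniqRq : ∀ a b : A, q * i a = q * i b → a = b := by
    intro a b h
    exact (uniqR 0 a 0 b (by rw [map_zero, mul_zero, zero_add, zero_add, h])).2
  -- decomposition of p * i a and q * i a
  have pdecomp : ∀ a : A, p * i a = i (E a) * p + i (a - F a) * q := by
    intro a
    obtain ⟨c, d, hcd⟩ := surjL (p * i a)
    have hc : c = E a := by
      apply uniqLp
      have h1' : p * i a * p = i c * p := by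
        rw [← hcd, add_mul, mul_assoc, mul_assoc, hqp0, hpp, mul_zero, add_zero]
      rw [← h1', hE]
    have hd : d = a - F a := by
      have e1 : i a * q = i (d + F a) * q := by
        have e2 : p * (i a * q) + q * (i a * q) = i a * q := by
          rw [← add_mul, hpq1, one_mul]
        have e3 : p * (i a * q) = i d * q := by
          rw [← mul_assoc, ← hcd, add_mul, mul_assoc, mul_assoc, hpq0, hqq, mul_zero, zero_add]
        have e4 : q * (i a * q) = i (F a) * q := by
          rw [← mul_assoc, hF]
        rw [← e2, e3, e4, map_add, add_mul]
      have := uniqLq _ _ e1.symm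
      exact eq_sub_of_add_eq this
    rw [← hcd, hc, hd]
  have piaq : ∀ a : A, p * i a * q = i (a - F a) * q := by
    intro a
    rw [pdecomp a, add_mul, mul_assoc, mul_assoc, hpq0, hqq, mul_zero, zero_add]
  have qdecomp : ∀ a : A, q * i a = i (a - E a) * p + i (F a) * q := by
    intro a
    have e2 : p * i a + q * i a = i a * p + i a * q := by
      rw [← add_mul, ← mul_add, hpq1, one_mul, mul_one]
    have e3 : q * i a = i a * p + i a * q - p * i a := by
      rw [← e2]; abel
    rw [e3, pdecomp, map_sub, map_sub, sub_mul, sub_mul,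
      show F a = a - (a - F a) by abel, map_sub, sub_mul]
    abel
  have qiap : ∀ a : A, q * i a * p = i (a - E a) * p := by
    intro a
    rw [qdecomp a, add_mul, mul_assoc, mul_assoc, hpp, hqp0, mul_zero, add_zero]
  -- basic identities for E and F
  have E1 : E 1 = 1 := by
    apply uniqLp
    rw [← hE, map_one, mul_one, hpp, one_mul]
  have F1 : F 1 = 1 := by
    apply uniqLq
    rw [← hF, map_one, mul_one, hqq, one_mul]
  have EE : ∀ a : A, E (E a) = E a := by
    intro a
    apply uniqLp
    rw [← hE (E a), mul_assoc, ← hE a, ← mul_assoc, ← mul_assoc, hpp]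
  have FF : ∀ a : A, F (F a) = F a := by
    intro a
    apply uniqLq
    rw [← hF (F a), mul_assoc, ← hF a, ← mul_assoc, ← mul_assoc, hqq]
  have Emul : ∀ a b : A, E (a * b) = E a * E b + (a - F a) * (b - E b) := by
    intro a b
    apply uniqLp
    rw [← hE]
    calc p * i (a * b) * p = (p * i a) * (i b * p) := by rw [map_mul]; noncomm_ring
    _ = i (E a) * (p * i b * p) + i (a - F a) * (q * i b * p) := by
        rw [pdecomp]; noncomm_ring
    _ = i (E a) * (i (E b) * p) + i (a - F a) * (i (b - E b) * p) := by rw [hE, qiap]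
    _ = i (E a * E b + (a - F a) * (b - E b)) * p := by
        rw [map_add, map_mul, map_mul, add_mul]; noncomm_ring
  have Fmul : ∀ a b : A, F (a * b) = F a * F b + (a - E a) * (b - F b) := by
    intro a b
    apply uniqLq
    rw [← hF]
    calc q * i (a * b) * q = (q * i a) * (i b * q) := by rw [map_mul]; noncomm_ring
    _ = i (a - E a) * (p * i b * q) + i (F a) * (q * i b * q) := by
        rw [qdecomp]; noncomm_ring
    _ = i (a - E a) * (i (b - F b) * q) + i (F a) * (i (F b) * q) := by rw [hF, piaq]
    _ = i (F a * F b + (a - E a) * (b - F b)) * q := by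
        rw [map_add, map_mul, map_mul, add_mul]; noncomm_ring
  -- right-side operators E' and F'
  have exE' : ∀ a : A, ∃ c : A, p * i a * p = p * i c := by
    intro a
    obtain ⟨c, d, hcd⟩ := surjR (p * i a * p)
    refine ⟨c, ?_⟩
    have e1 : p * (p * i a * p) = p * i a * p := by
      rw [← mul_assoc, ← mul_assoc, hpp]
    rw [← e1, ← hcd, mul_add, ← mul_assoc, ← mul_assoc, hpp, hpq0, zero_mul, add_zero]
  have exF' : ∀ a : A, ∃ c : A, q * i a * q = q * i c := by
    intro a
    obtain ⟨c, d, hcd⟩ := surjR (q * i a * q)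
    refine ⟨d, ?_⟩
    have e1 : q * (q * i a * q) = q * i a * q := by
      rw [← mul_assoc, ← mul_assoc, hqq]
    rw [← e1, ← hcd, mul_add, ← mul_assoc, ← mul_assoc, hqq, hqp0, zero_mul, zero_add]
  choose E' hE' using exE'
  choose F' hF' using exF'
  -- mirror decompositions
  have iap : ∀ a : A, i a * p = p * i (E' a) + q * i (a - F' a) := by
    intro a
    have e2 : p * (i a * p) + q * (i a * p) = i a * p := by
      rw [← add_mul, hpq1, one_mul]
    have e3 : p * (i a * p) = p * i (E' a) := by rw [← mul_assoc, hE']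
    have e4 : q * (i a * p) = q * i (a - F' a) := by
      have e5 : q * i a * p + q * i a * q = q * i a := by
        rw [mul_assoc, mul_assoc, ← mul_add, ← mul_add, hpq1, mul_one]
      have e6 : q * i a * p = q * i a - q * i (F' a) := by
        rw [← hF']; exact eq_sub_of_add_eq e5
      rw [← mul_assoc, e6, map_sub, mul_sub]
    rw [← e2, e3, e4]
  have iaq : ∀ a : A, i a * q = p * i (a - E' a) + q * i (F' a) := by
    intro a
    have e2 : p * (i a * q) + q * (i a * q) = i a * q := by
      rw [← add_mul, hpq1, one_mul]
    have e4 : q * (i a * q) = q * i (F' a) := by rw [← mul_assoc, hF']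
    have e3 : p * (i a * q) = p * i (a - E' a) := by
      have e5 : p * i a * q + p * i a * p = p * i a := by
        rw [mul_assoc, mul_assoc, ← mul_add, ← mul_add, add_comm q p, hpq1, mul_one]
      have e6 : p * i a * q = p * i a - p * i (E' a) := by
        rw [← hE']; exact eq_sub_of_add_eq e5
      rw [← mul_assoc, e6, map_sub, mul_sub]
    rw [← e2, e3, e4]
  -- relations between (E,F) and (E',F')
  have rEE' : ∀ a : A, E (E' a) = E a := by
    intro a
    apply uniqLp
    rw [← hE (E' a), ← hE a, ← hE' a]
    rw [mul_assoc, hpp]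
  have rFE' : ∀ a : A, F (E' a) = E' a := by
    intro a
    have e1 : p * i (E' a) = i (E (E' a)) * p + i (E' a - F (E' a)) * q := pdecomp _
    have e2 : p * i (E' a) = i (E a) * p + i 0 * q := by
      rw [← hE' a, hE a, map_zero, zero_mul, add_zero]
    have := (uniqL _ _ _ _ (e1.symm.trans e2)).2
    have h0 : E' a - F (E' a) = 0 := this
    rw [sub_eq_zero] at h0
    exact h0.symm
  have rEF' : ∀ a : A, E (F' a) = F' a := by
    intro a
    have e1 : q * i (F' a) = i (F' a - E (F' a)) * p + i (F (F' a)) * q := qdecomp _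
    have e2 : q * i (F' a) = i 0 * p + i (F a) * q := by
      rw [← hF' a, hF a, map_zero, zero_mul, zero_add]
    have := (uniqL _ _ _ _ (e1.symm.trans e2)).1
    have h0 : F' a - E (F' a) = 0 := this
    rw [sub_eq_zero] at h0
    exact h0.symm
  have rFF' : ∀ a : A, F (F' a) = F a := by
    intro a
    have e1 : q * i (F' a) = i (F' a - E (F' a)) * p + i (F (F' a)) * q := qdecomp _
    have e2 : q * i (F' a) = i 0 * p + i (F a) * q := by
      rw [← hF' a, hF a, map_zero, zero_mul, zero_add]
    exact (uniqL _ _ _ _ (e1.symm.trans e2)).2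
  have rE'E : ∀ a : A, E' (E a) = E' a := by
    intro a
    have e1 : i (E a) * p = p * i (E' (E a)) + q * i (E a - F' (E a)) := iap _
    have e2 : i (E a) * p = p * i (E' a) + q * i 0 := by
      rw [← hE a, hE' a, map_zero, mul_zero, add_zero]
    exact (uniqR _ _ _ _ (e1.symm.trans e2)).1
  have rF'E : ∀ a : A, F' (E a) = E a := by
    intro a
    have e1 : i (E a) * p = p * i (E' (E a)) + q * i (E a - F' (E a)) := iap _
    have e2 : i (E a) * p = p * i (E' a) + q * i 0 := by
      rw [← hE a, hE' a, map_zero, mul_zero, add_zero]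
    have h0 : E a - F' (E a) = 0 := (uniqR _ _ _ _ (e1.symm.trans e2)).2
    rw [sub_eq_zero] at h0
    exact h0.symm
  have rE'F : ∀ a : A, E' (F a) = F a := by
    intro a
    have e1 : i (F a) * q = p * i (F a - E' (F a)) + q * i (F' (F a)) := iaq _
    have e2 : i (F a) * q = p * i 0 + q * i (F' a) := by
      rw [← hF a, hF' a, map_zero, mul_zero, zero_add]
    have h0 : F a - E' (F a) = 0 := (uniqR _ _ _ _ (e1.symm.trans e2)).1
    rw [sub_eq_zero] at h0
    exact h0.symm
  have rF'F : ∀ a : A, F' (F a) = F' a := by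
    intro a
    have e1 : i (F a) * q = p * i (F a - E' (F a)) + q * i (F' (F a)) := iaq _
    have e2 : i (F a) * q = p * i 0 + q * i (F' a) := by
      rw [← hF a, hF' a, map_zero, mul_zero, zero_add]
    exact (uniqR _ _ _ _ (e1.symm.trans e2)).2
  -- φ = E + F - id is bijective with inverse a ↦ E' a + F' a - a
  have phiE' : ∀ a : A, E' (E a + F a - a) = F a := by
    intro a
    apply uniqRp
    rw [← hE' (E a + F a - a)]
    have e1 : p * i (E a + F a - a) * p = p * i (E a) * p + p * i (F a) * p - p * i a * p := by
      rw [map_sub, map_add]; noncomm_ring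
    rw [e1, hE' (E a), hE' (F a), hE' a, rE'E, rE'F]
    abel
  have phiF' : ∀ a : A, F' (E a + F a - a) = E a := by
    intro a
    apply uniqRq
    rw [← hF' (E a + F a - a)]
    have e1 : q * i (E a + F a - a) * q = q * i (E a) * q + q * i (F a) * q - q * i a * q := by
      rw [map_sub, map_add]; noncomm_ring
    rw [e1, hF' (E a), hF' (F a), hF' a, rF'E, rF'F]
    abel
  have phiBij : Function.Bijective (⇑(E + F - LinearMap.id (R := R) (M := A))) := by
    rw [Function.bijective_iff_has_inverse]
    refine ⟨fun a => E' a + F' a - a, ?_, ?_⟩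
    · intro a
      simp only [LinearMap.sub_apply, LinearMap.add_apply, LinearMap.id_apply]
      rw [phiE' a, phiF' a]
      abel
    · intro a
      simp only [LinearMap.sub_apply, LinearMap.add_apply, LinearMap.id_apply]
      rw [map_sub, map_sub, map_add, map_add, rEE', rEF', rFE', rFF']
      abel
  -- the linear automorphism Φl of X
  let φe : A ≃ₗ[R] A := LinearEquiv.ofBijective (E + F - LinearMap.id) phiBij
  let Bt : A ⊗[R] (R × R) ≃ₗ[R] X := LinearEquiv.ofBijective (blendMul R i j) h1
  let S : A ⊗[R] (R × R) ≃ₗ[R] A ⊗[R] (R × R) :=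
    TensorProduct.congr φe (LinearEquiv.prodComm R R R)
  let Φl : X ≃ₗ[R] X := (Bt.symm.trans S).trans Bt
  have hB : ∀ a b : A, Bt (a ⊗ₜ[R] ((1:R),(0:R)) + b ⊗ₜ[R] ((0:R),(1:R))) = i a * p + i b * q := by
    intro a b
    show blendMul R i j _ = _
    rw [map_add, blendMul_tmul, blendMul_tmul, hp, hq]
  have key : ∀ a b : A, Φl (i a * p + i b * q)
      = i (E b + F b - b) * p + i (E a + F a - a) * q := by
    intro a b
    have step1 : Bt.symm (i a * p + i b * q)
        = a ⊗ₜ[R] ((1:R),(0:R)) + b ⊗ₜ[R] ((0:R),(1:R)) := by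
      rw [LinearEquiv.symm_apply_eq]; exact (hB a b).symm
    have step2 : S (a ⊗ₜ[R] ((1:R),(0:R)) + b ⊗ₜ[R] ((0:R),(1:R)))
        = (E b + F b - b) ⊗ₜ[R] ((1:R),(0:R)) + (E a + F a - a) ⊗ₜ[R] ((0:R),(1:R)) := by
      rw [map_add]
      show TensorProduct.congr φe (LinearEquiv.prodComm R R R) _
        + TensorProduct.congr φe (LinearEquiv.prodComm R R R) _ = _
      rw [TensorProduct.congr_tmul, TensorProduct.congr_tmul]
      have hφe : ∀ x : A, φe x = E x + F x - x := by
        intro x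
        simp only [φe, LinearEquiv.ofBijective_apply, LinearMap.sub_apply,
          LinearMap.add_apply, LinearMap.id_apply]
      rw [hφe, hφe]
      have hsw1 : (LinearEquiv.prodComm R R R) ((1:R),(0:R)) = ((0:R),(1:R)) := rfl
      have hsw2 : (LinearEquiv.prodComm R R R) ((0:R),(1:R)) = ((1:R),(0:R)) := rfl
      rw [hsw1, hsw2, add_comm]
    show Bt (S (Bt.symm (i a * p + i b * q))) = _
    rw [step1, step2, hB]
  -- product formula in X
  have hPP : ∀ x y : A, (i x * p) * (i y * p) = i (x * E y) * p := by
    intro x y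
    calc (i x * p) * (i y * p) = i x * (p * i y * p) := by noncomm_ring
    _ = i x * (i (E y) * p) := by rw [hE]
    _ = i (x * E y) * p := by rw [map_mul]; noncomm_ring
  have hPQ : ∀ x y : A, (i x * p) * (i y * q) = i (x * (y - F y)) * q := by
    intro x y
    calc (i x * p) * (i y * q) = i x * (p * i y * q) := by noncomm_ring
    _ = i x * (i (y - F y) * q) := by rw [piaq]
    _ = i (x * (y - F y)) * q := by rw [map_mul]; noncomm_ring
  have hQP : ∀ x y : A, (i x * q) * (i y * p) = i (x * (y - E y)) * p := by
    intro x y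
    calc (i x * q) * (i y * p) = i x * (q * i y * p) := by noncomm_ring
    _ = i x * (i (y - E y) * p) := by rw [qiap]
    _ = i (x * (y - E y)) * p := by rw [map_mul]; noncomm_ring
  have hQQ : ∀ x y : A, (i x * q) * (i y * q) = i (x * F y) * q := by
    intro x y
    calc (i x * q) * (i y * q) = i x * (q * i y * q) := by noncomm_ring
    _ = i x * (i (F y) * q) := by rw [hF]
    _ = i (x * F y) * q := by rw [map_mul]; noncomm_ring
  have mulX : ∀ a b c d : A, (i a * p + i b * q) * (i c * p + i d * q)
      = i (a * E c + b * (c - E c)) * p + i (a * (d - F d) + b * F d) * q := by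
    intro a b c d
    rw [add_mul, mul_add, mul_add, hPP, hPQ, hQP, hQQ, map_add, map_add, add_mul, add_mul]
    abel
  -- the two coefficient identities
  have cId1 : ∀ a b d : A,
      E (a * (d - F d) + b * F d) + F (a * (d - F d) + b * F d) - (a * (d - F d) + b * F d)
      = (E b + F b - b) * E (E d + F d - d)
        + (E a + F a - a) * (E d + F d - d - E (E d + F d - d)) := by
    intro a b d
    simp only [map_add, map_sub]
    rw [Emul, Emul, Fmul, Fmul]
    simp only [map_sub, map_add, EE, FF]
    noncomm_ring
  have cId2 : ∀ a b c : A,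
      E (a * E c + b * (c - E c)) + F (a * E c + b * (c - E c)) - (a * E c + b * (c - E c))
      = (E b + F b - b) * (E c + F c - c - F (E c + F c - c))
        + (E a + F a - a) * F (E c + F c - c) := by
    intro a b c
    simp only [map_add, map_sub]
    rw [Emul, Emul, Fmul, Fmul]
    simp only [map_sub, map_add, EE, FF]
    noncomm_ring
  have Φmul : ∀ x y : X, Φl (x * y) = Φl x * Φl y := by
    intro x y
    obtain ⟨a, b, rfl⟩ := surjL x
    obtain ⟨c, d, rfl⟩ := surjL y
    rw [mulX, key, key a b, key c d, mulX, cId1 a b d, cId2 a b c]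
  have Φone : Φl 1 = 1 := by
    have h1' : (1 : X) = i 1 * p + i 1 * q := by
      rw [map_one, one_mul, one_mul, hpq1]
    rw [h1', key, E1, F1, show (1:A) + 1 - 1 = 1 by abel, map_one, one_mul, one_mul, hpq1]
  -- the algebra automorphism
  set ΦA : X ≃ₐ[R] X := AlgEquiv.ofLinearEquiv Φl Φone Φmul with hΦA
  have hAapp : ∀ x : X, ΦA x = Φl x := fun x => rfl
  have hAi : ∀ a : A, ΦA (i a) = i (E a + F a - a) := by
    intro a
    have hia : i a = i a * p + i a * q := by rw [← mul_add, hpq1, mul_one]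
    rw [hAapp, hia, key, ← mul_add, hpq1, mul_one]
  have hAp : ΦA p = q := by
    have hp0 : p = i 1 * p + i 0 * q := by
      rw [map_one, map_zero, one_mul, zero_mul, add_zero]
    rw [hAapp, hp0, key]
    simp [E1, F1]
  have hAq : ΦA q = p := by
    have hq0 : q = i 0 * p + i 1 * q := by
      rw [map_one, map_zero, one_mul, zero_mul, zero_add]
    rw [hAapp, hq0, key]
    simp [E1, F1]
  have part2 : ∀ Φ : X ≃ₐ[R] X, (∀ a : A, Φ (i a) = i (E a + F a - a)) → Φ p = q → Φ q = p →
      ∀ a b : A, Φ (i a * p + i b * q) = i (E b + F b - b) * p + i (E a + F a - a) * q := by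
    intro Φ hΦi hΦp hΦq a b
    rw [map_add, map_mul, map_mul, hΦi, hΦi, hΦp, hΦq]
    exact add_comm _ _
  refine ⟨⟨ΦA, ⟨hAi, hAp, hAq⟩, ?_⟩, part2⟩
  rintro Ψ ⟨hΨi, hΨp, hΨq⟩
  apply AlgEquiv.ext
  intro x
  obtain ⟨a, b, rfl⟩ := surjL x
  rw [part2 Ψ hΨi hΨp hΨq, part2 ΦA hAi hAp hAq]
end

section
/- For every a ∈ A, one has pa = φ(a)p + F⊥(a), where F⊥ = id − F and φ = E + F − id. -/
open TensorProduct

theorem stmt9 {R A X : Type*} [CommRing R] [Ring A] [Ring X] [Algebra R A] [Algebra R X]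
    (i : A →ₐ[R] X) (j : (R × R) →ₐ[R] X)
    (h1 : Function.Bijective (blendMul R i j)) (h2 : Function.Bijective (blendMul R j i))
    (p q : X) (hp : p = j (1, 0)) (hq : q = j (0, 1))
    (E F : A →ₗ[R] A)
    (hE : ∀ a : A, p * i a * p = i (E a) * p)
    (hF : ∀ a : A, q * i a * q = i (F a) * q) :
    ∀ a : A, p * i a = i (E a + F a - a) * p + i (a - F a) := by
  intro a
  have hpq : p + q = 1 := by
    rw [hp, hq, ← map_add]
    have : ((1, 0) : R × R) + (0, 1) = 1 := by
      simp [Prod.ext_iff]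
    rw [this, map_one]
  have hq' : q = 1 - p := by rw [← hpq]; noncomm_ring
  have h3 := hE a
  have h4 := hF a
  rw [hq'] at h4
  rw [map_sub, map_add, map_sub]
  linear_combination (norm := noncomm_ring) h3 - h4
end

section
/- There is a bijection between conditional expectations G : X → A (A-bimodule maps restricting to the identity on A) and elements h ∈ A satisfying ha = φ(a)h + F⊥(a) for all a ∈ A; the bijection is G ↦ G(p), and given such h the corresponding expectation is G(ap + bq) = ah + b(1 − h). -/
open TensorProduct

section

variable {R A X : Type*} [CommRing R] [Ring A] [Ring X] [Algebra R A] [Algebra R X]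

def pairMap (i : A →ₐ[R] X) (p q : X) : A × A →ₗ[R] X :=
  (LinearMap.mulRight R p ∘ₗ i.toLinearMap).coprod (LinearMap.mulRight R q ∘ₗ i.toLinearMap)

@[simp]
theorem pairMap_apply (i : A →ₐ[R] X) (p q : X) (u v : A) :
    pairMap i p q (u, v) = i u * p + i v * q := rfl

theorem pairMap_eq_blendMul_comp (i : A →ₐ[R] X) (j : (R × R) →ₐ[R] X) :
    pairMap i (j (1, 0)) (j (0, 1)) = blendMul R i j ∘ₗ
      (((TensorProduct.rid R A).symm.prodCongr (TensorProduct.rid R A).symm).trans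
        (TensorProduct.prodRight R R A R R).symm).toLinearMap := by
  have hfst (u : A) : (prodRight R R A R R).symm (u ⊗ₜ 1, 0) = u ⊗ₜ ((1 : R), (0 : R)) := by
    rw [LinearEquiv.symm_apply_eq]; simp
  have hsnd (u : A) : (prodRight R R A R R).symm (0, u ⊗ₜ 1) = u ⊗ₜ ((0 : R), (1 : R)) := by
    rw [LinearEquiv.symm_apply_eq]; simp
  ext u <;> simp [blendMul, hfst, hsnd]

section Peirce

variable (i : A →ₐ[R] X) {p q : X}

theorem map_eq_pairMap (hpq : p + q = 1) (a : A) : i a = pairMap i p q (a, a) := by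
  rw [pairMap_apply, ← mul_add, hpq, mul_one]

variable (hpq : p + q = 1) (hp : IsIdempotentElem p)
include hpq hp

theorem mul_eq_zero_of_add_eq_one : q * p = 0 ∧ p * q = 0 := by
  obtain rfl : q = 1 - p := eq_sub_of_add_eq' hpq
  exact ⟨by rw [sub_mul, one_mul, hp.eq, sub_self], by rw [mul_sub, mul_one, hp.eq, sub_self]⟩

theorem pairMap_mul_fst (u v : A) : pairMap i p q (u, v) * p = i u * p := by
  rw [pairMap_apply, add_mul, mul_assoc, mul_assoc, hp.eq, (mul_eq_zero_of_add_eq_one hpq hp).1,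
    mul_zero, add_zero]

theorem pairMap_mul_snd (u v : A) : pairMap i p q (u, v) * q = i v * q := by
  have hq : IsIdempotentElem q := eq_sub_of_add_eq' hpq ▸ hp.one_sub
  rw [pairMap_apply, add_mul, mul_assoc, mul_assoc, hq.eq, (mul_eq_zero_of_add_eq_one hpq hp).2,
    mul_zero, zero_add]

theorem fst_mul_map_eq_pairMap (hX : Function.Bijective (pairMap i p q)) {a e f : A}
    (he : p * i a * p = i e * p) (hf : q * i a * q = i f * q) :
    p * i a = pairMap i p q (e, a - f) := by
  obtain ⟨⟨u, v⟩, huv⟩ := hX.2 (p * i a)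
  have hu : u = e := by
    have := pairMap_mul_fst i hpq hp u v
    rw [huv, he] at this
    simpa using hX.1 (a₁ := (u, 0)) (a₂ := (e, 0)) (by simp [this])
  have hq : q * i a = pairMap i p q (a - u, a - v) := by
    calc q * i a = i a - p * i a := by rw [eq_sub_of_add_eq' hpq, sub_mul, one_mul]
      _ = pairMap i p q (a - u, a - v) := by
        rw [← Prod.mk_sub_mk, map_sub, huv, ← map_eq_pairMap i hpq]
  have hv : a - v = f := by
    have := pairMap_mul_snd i hpq hp (a - u) (a - v)
    rw [← hq, hf] at this
    simpa using hX.1 (a₁ := (0, a - v)) (a₂ := (0, f)) (by simp [this])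
  rw [← huv, hu, ← hv, sub_sub_cancel]

end Peirce

structure IsCondExp (i : A →ₐ[R] X) (G : X →ₗ[R] A) : Prop where
  map_mul_left : ∀ (a : A) (x : X), G (i a * x) = a * G x
  map_mul_right : ∀ (x : X) (a : A), G (x * i a) = G x * a
  leftInverse : ∀ a : A, G (i a) = a

section CondExp

variable {i : A →ₐ[R] X} {p q : X} {G : X →ₗ[R] A}

theorem map_pairMap_of_map_mul_left (hl : ∀ (a : A) (x : X), G (i a * x) = a * G x) (u v : A) :
    G (pairMap i p q (u, v)) = u * G p + v * G q := by
  rw [pairMap_apply, map_add, hl, hl]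

theorem map_snd_eq_one_sub (hpq : p + q = 1) (hid : ∀ a : A, G (i a) = a) : G q = 1 - G p := by
  rw [eq_sub_of_add_eq' hpq, map_sub, ← map_one i, hid]

theorem map_mul_right_of_map_fst_mul (hX : Function.Surjective (pairMap i p q))
    (hpq : p + q = 1) (hl : ∀ (a : A) (x : X), G (i a * x) = a * G x) (hid : ∀ a : A, G (i a) = a)
    (hpa : ∀ a : A, G (p * i a) = G p * a) (x : X) (a : A) : G (x * i a) = G x * a := by
  obtain ⟨⟨u, v⟩, rfl⟩ := hX x
  have hqa : G (q * i a) = (1 - G p) * a := by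
    rw [eq_sub_of_add_eq' hpq, sub_mul, one_mul, map_sub, hid, hpa, sub_mul, one_mul]
  rw [map_pairMap_of_map_mul_left hl, pairMap_apply, add_mul, mul_assoc, mul_assoc, map_add, hl, hl,
    hpa, hqa, map_snd_eq_one_sub hpq hid]
  noncomm_ring

namespace IsCondExp

variable (hG : IsCondExp i G) (hpq : p + q = 1)
include hG hpq

theorem map_pairMap (u v : A) : G (pairMap i p q (u, v)) = u * G p + v * (1 - G p) := by
  rw [map_pairMap_of_map_mul_left hG.map_mul_left, map_snd_eq_one_sub hpq hG.leftInverse]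

theorem fst_mul_eq {a e f : A} (hpa : p * i a = pairMap i p q (e, a - f)) :
    G p * a = (e + f - a) * G p + (a - f) := by
  rw [← hG.map_mul_right, hpa, hG.map_pairMap hpq]
  noncomm_ring

theorem ext_of_map_fst (hX : Function.Surjective (pairMap i p q)) {G' : X →ₗ[R] A}
    (hG' : IsCondExp i G') (h : G p = G' p) : G = G' := by
  ext x
  obtain ⟨⟨u, v⟩, rfl⟩ := hX x
  rw [hG.map_pairMap hpq, hG'.map_pairMap hpq, h]

end IsCondExp

variable (hX : Function.Bijective (pairMap i p q))

noncomputable def condExpOfElem (h : A) : X →ₗ[R] A :=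
  (LinearMap.mulRight R h).coprod (LinearMap.mulRight R (1 - h)) ∘ₗ
    (LinearEquiv.ofBijective _ hX).symm.toLinearMap

theorem condExpOfElem_pairMap (h u v : A) :
    condExpOfElem hX h (pairMap i p q (u, v)) = u * h + v * (1 - h) := by
  simp only [condExpOfElem, LinearMap.comp_apply, LinearEquiv.coe_coe,
    LinearEquiv.ofBijective_symm_apply_apply, LinearMap.coprod_apply, LinearMap.mulRight_apply]

theorem condExpOfElem_fst (h : A) : condExpOfElem hX h p = h := by
  simpa using condExpOfElem_pairMap hX h 1 0

theorem isCondExp_condExpOfElem (hpq : p + q = 1) {E F : A → A}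
    (hpa : ∀ a : A, p * i a = pairMap i p q (E a, a - F a)) {h : A}
    (hh : ∀ a : A, h * a = (E a + F a - a) * h + (a - F a)) :
    IsCondExp i (condExpOfElem hX h) := by
  have hl (a : A) (x : X) : condExpOfElem hX h (i a * x) = a * condExpOfElem hX h x := by
    obtain ⟨⟨u, v⟩, rfl⟩ := hX.2 x
    have : i a * pairMap i p q (u, v) = pairMap i p q (a * u, a * v) := by
      simp only [pairMap_apply, map_mul, mul_add, mul_assoc]
    rw [this, condExpOfElem_pairMap, condExpOfElem_pairMap, mul_add, mul_assoc, mul_assoc]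
  have hid (a : A) : condExpOfElem hX h (i a) = a := by
    rw [map_eq_pairMap i hpq, condExpOfElem_pairMap, ← mul_add, add_sub_cancel, mul_one]
  refine ⟨hl, map_mul_right_of_map_fst_mul hX.2 hpq hl hid fun a => ?_, hid⟩
  rw [hpa, condExpOfElem_pairMap, condExpOfElem_fst hX, hh]
  noncomm_ring

end CondExp

end

theorem stmt10_general {R A X : Type*} [CommRing R] [Ring A] [Ring X] [Algebra R A] [Algebra R X]
    (i : A →ₐ[R] X) (j : (R × R) →ₐ[R] X)
    (h1 : Function.Bijective (blendMul R i j))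
    (p q : X) (hp : p = j (1, 0)) (hq : q = j (0, 1))
    (E F : A →ₗ[R] A)
    (hE : ∀ a : A, p * i a * p = i (E a) * p)
    (hF : ∀ a : A, q * i a * q = i (F a) * q) :
    (∀ G : X →ₗ[R] A, (∀ (a : A) (x : X), G (i a * x) = a * G x) →
      (∀ (x : X) (a : A), G (x * i a) = G x * a) → (∀ a : A, G (i a) = a) →
      ∀ a : A, G p * a = (E a + F a - a) * G p + (a - F a)) ∧
    (∀ h : A, (∀ a : A, h * a = (E a + F a - a) * h + (a - F a)) →
      ∃ G : X →ₗ[R] A, (∀ (a : A) (x : X), G (i a * x) = a * G x) ∧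
        (∀ (x : X) (a : A), G (x * i a) = G x * a) ∧ (∀ a : A, G (i a) = a) ∧
        G p = h ∧ ∀ a b : A, G (i a * p + i b * q) = a * h + b * (1 - h)) ∧
    (∀ G₁ G₂ : X →ₗ[R] A, (∀ (a : A) (x : X), G₁ (i a * x) = a * G₁ x) →
      (∀ (x : X) (a : A), G₁ (x * i a) = G₁ x * a) → (∀ a : A, G₁ (i a) = a) →
      (∀ (a : A) (x : X), G₂ (i a * x) = a * G₂ x) →
      (∀ (x : X) (a : A), G₂ (x * i a) = G₂ x * a) → (∀ a : A, G₂ (i a) = a) →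
      G₁ p = G₂ p → G₁ = G₂) := by
  have hX : Function.Bijective (pairMap i p q) := by
    rw [hp, hq, pairMap_eq_blendMul_comp, LinearMap.coe_comp, LinearEquiv.coe_coe]
    exact h1.comp (LinearEquiv.bijective _)
  have hpq : p + q = 1 := by
    rw [hp, hq, ← map_add, Prod.mk_add_mk, add_zero, zero_add, Prod.mk_one_one, map_one]
  have hidem : IsIdempotentElem p := hp ▸ IsIdempotentElem.map (by simp [IsIdempotentElem]) j
  have hpa (a : A) : p * i a = pairMap i p q (E a, a - F a) :=
    fst_mul_map_eq_pairMap i hpq hidem hX (hE a) (hF a)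
  refine ⟨fun G hl hr hid => fun a =>
    (IsCondExp.mk hl hr hid).fst_mul_eq hpq (hpa a), fun h hh => ?_,
    fun G₁ G₂ hl₁ hr₁ hid₁ hl₂ hr₂ hid₂ =>
      (IsCondExp.mk hl₁ hr₁ hid₁).ext_of_map_fst hpq hX.2 (IsCondExp.mk hl₂ hr₂ hid₂)⟩
  obtain ⟨hl, hr, hid⟩ := isCondExp_condExpOfElem hX hpq hpa hh
  exact ⟨condExpOfElem hX h, hl, hr, hid, condExpOfElem_fst hX h, condExpOfElem_pairMap hX h⟩

theorem stmt10 {R A X : Type*} [CommRing R] [Ring A] [Ring X] [Algebra R A] [Algebra R X]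
    (i : A →ₐ[R] X) (j : (R × R) →ₐ[R] X)
    (h1 : Function.Bijective (blendMul R i j)) (h2 : Function.Bijective (blendMul R j i))
    (p q : X) (hp : p = j (1, 0)) (hq : q = j (0, 1))
    (E F : A →ₗ[R] A)
    (hE : ∀ a : A, p * i a * p = i (E a) * p)
    (hF : ∀ a : A, q * i a * q = i (F a) * q) :
    (∀ G : X →ₗ[R] A, (∀ (a : A) (x : X), G (i a * x) = a * G x) →
      (∀ (x : X) (a : A), G (x * i a) = G x * a) → (∀ a : A, G (i a) = a) →
      ∀ a : A, G p * a = (E a + F a - a) * G p + (a - F a)) ∧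
    (∀ h : A, (∀ a : A, h * a = (E a + F a - a) * h + (a - F a)) →
      ∃ G : X →ₗ[R] A, (∀ (a : A) (x : X), G (i a * x) = a * G x) ∧
        (∀ (x : X) (a : A), G (x * i a) = G x * a) ∧ (∀ a : A, G (i a) = a) ∧
        G p = h ∧ ∀ a b : A, G (i a * p + i b * q) = a * h + b * (1 - h)) ∧
    (∀ G₁ G₂ : X →ₗ[R] A, (∀ (a : A) (x : X), G₁ (i a * x) = a * G₁ x) →
      (∀ (x : X) (a : A), G₁ (x * i a) = G₁ x * a) → (∀ a : A, G₁ (i a) = a) →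
      (∀ (a : A) (x : X), G₂ (i a * x) = a * G₂ x) →
      (∀ (x : X) (a : A), G₂ (x * i a) = G₂ x * a) → (∀ a : A, G₂ (i a) = a) →
      G₁ p = G₂ p → G₁ = G₂) :=
  stmt10_general i j h1 p q hp hq E F hE hF
end

section
/- For a conditional expectation G : X → A with h = G(p), the following are equivalent: (i) G∘Φ = Φ∘G; (ii) φ(h) = 1 − h. -/
open TensorProduct

/-!
Put `φ = E + F - id`, so that `Φ ∘ i = i ∘ φ`; as `G ∘ i = id`, `i` is injective and `φ` is
multiplicative and unital. Since `X` is spanned by the `i a * p` and `i a * q`, the linear maps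
`G ∘ Φ` and `φ ∘ G` agree as soon as they agree there, where they take the values
`φ a * G q`, `φ a * φ (G p)` and `φ a * G p`, `φ a * φ (G q)`. With `p + q = 1`, i.e. `G q = 1 - G p`,
both conditions reduce to `φ (G p) = 1 - G p`.
-/

section Blend

variable {R A B X M : Type*} [CommRing R] [Ring A] [Ring B] [Ring X] [AddCommGroup M]
  [Algebra R A] [Algebra R B] [Algebra R X] [Module R M] {i : A →ₐ[R] X} {j : B →ₐ[R] X}

theorem LinearMap.ext_of_blendMul_surjective (hij : Function.Surjective (blendMul R i j))
    {f g : X →ₗ[R] M} (h : ∀ a b, f (i a * j b) = g (i a * j b)) : f = g := by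
  suffices f ∘ₗ blendMul R i j = g ∘ₗ blendMul R i j from
    LinearMap.ext fun x ↦ by obtain ⟨y, rfl⟩ := hij x; exact LinearMap.congr_fun this y
  exact TensorProduct.ext' h

end Blend

theorem AlgHom.prod_apply_eq {R X : Type*} [CommSemiring R] [Semiring X] [Algebra R X]
    (j : (R × R) →ₐ[R] X) (r s : R) : j (r, s) = r • j (1, 0) + s • j (0, 1) := by
  rw [← map_smul, ← map_smul, ← map_add]
  simp

theorem AlgHom.map_one_zero_add_map_zero_one {R X : Type*} [CommSemiring R] [Semiring X]
    [Algebra R X] (j : (R × R) →ₐ[R] X) : j (1, 0) + j (0, 1) = 1 := by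
  rw [← map_add, Prod.mk_add_mk, add_zero, zero_add]
  exact map_one j

theorem LinearMap.ext_of_blendMul_prod_surjective {R A X M : Type*} [CommRing R] [Ring A]
    [Ring X] [AddCommGroup M] [Algebra R A] [Algebra R X] [Module R M] {i : A →ₐ[R] X}
    {j : (R × R) →ₐ[R] X} (hij : Function.Surjective (blendMul R i j)) {f g : X →ₗ[R] M}
    (hp : ∀ a, f (i a * j (1, 0)) = g (i a * j (1, 0)))
    (hq : ∀ a, f (i a * j (0, 1)) = g (i a * j (0, 1))) : f = g :=
  LinearMap.ext_of_blendMul_surjective hij fun a ⟨r, s⟩ ↦ by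
    rw [j.prod_apply_eq r s]
    simp only [mul_add, mul_smul_comm, map_add, map_smul, hp, hq]

section Semiconj

variable {A X F G : Type*} [MulOneClass A] [MulOneClass X] [FunLike F A X] [MonoidHomClass F A X]
  [FunLike G X X] [MonoidHomClass G X X] {i : F} {ψ : A → A} {Φ : G}

theorem map_mul_of_semiconj (hi : Function.Injective i) (hψ : Function.Semiconj i ψ Φ)
    (a b : A) : ψ (a * b) = ψ a * ψ b :=
  hi <| by rw [hψ, map_mul, map_mul, map_mul, hψ, hψ]

theorem map_one_of_semiconj (hi : Function.Injective i) (hψ : Function.Semiconj i ψ Φ) :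
    ψ 1 = 1 :=
  hi <| by rw [hψ, map_one, map_one]

end Semiconj

theorem stmt13_general {R A X : Type*} [CommRing R] [Ring A] [Ring X] [Algebra R A] [Algebra R X]
    (i : A →ₐ[R] X) (j : (R × R) →ₐ[R] X)
    (h1 : Function.Bijective (blendMul R i j))
    (p q : X) (hp : p = j (1, 0)) (hq : q = j (0, 1))
    (E F : A →ₗ[R] A)
    (G : X →ₗ[R] A)
    (hG1 : ∀ (a : A) (x : X), G (i a * x) = a * G x)
    (hG3 : ∀ a : A, G (i a) = a)
    (Φ : X ≃ₐ[R] X) (hΦa : ∀ a : A, Φ (i a) = i (E a + F a - a))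
    (hΦp : Φ p = q) (hΦq : Φ q = p) :
    (∀ x : X, G (Φ x) = E (G x) + F (G x) - G x) ↔
      E (G p) + F (G p) - G p = 1 - G p := by
  subst hp hq
  set φ : A →ₗ[R] A := E + F - LinearMap.id
  have hi : Function.Injective i := Function.LeftInverse.injective hG3
  have hφ : Function.Semiconj i φ Φ := fun a ↦ (hΦa a).symm
  have hGq : G (j (0, 1)) = 1 - G (j (1, 0)) := by
    rw [eq_sub_iff_add_eq', ← map_add, j.map_one_zero_add_map_zero_one, ← map_one i, hG3]
  show (∀ x, G (Φ x) = φ (G x)) ↔ φ (G (j (1, 0))) = 1 - G (j (1, 0))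
  refine ⟨fun H ↦ by rw [← H, hΦp, hGq], fun hφp x ↦ ?_⟩
  have hφq : φ (G (j (0, 1))) = G (j (1, 0)) := by
    rw [hGq, map_sub, map_one_of_semiconj hi hφ, hφp, sub_sub_cancel]
  have intertwine_mul : ∀ a {e f : X}, Φ e = f → φ (G e) = G f →
      G (Φ (i a * e)) = φ (G (i a * e)) := fun a e f he hef ↦ by
    rw [map_mul, ← hφ a, he, hG1, hG1, map_mul_of_semiconj hi hφ, hef]
  have := LinearMap.ext_of_blendMul_prod_surjective h1.2 (f := G ∘ₗ Φ.toLinearMap) (g := φ ∘ₗ G)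
    (fun a ↦ intertwine_mul a hΦp (hφp.trans hGq.symm)) (fun a ↦ intertwine_mul a hΦq hφq)
  exact LinearMap.congr_fun this x

theorem stmt13 {R A X : Type*} [CommRing R] [Ring A] [Ring X] [Algebra R A] [Algebra R X]
    (i : A →ₐ[R] X) (j : (R × R) →ₐ[R] X)
    (h1 : Function.Bijective (blendMul R i j)) (h2 : Function.Bijective (blendMul R j i))
    (p q : X) (hp : p = j (1, 0)) (hq : q = j (0, 1))
    (E F : A →ₗ[R] A)
    (hE : ∀ a : A, p * i a * p = i (E a) * p)
    (hF : ∀ a : A, q * i a * q = i (F a) * q)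
    (G : X →ₗ[R] A)
    (hG1 : ∀ (a : A) (x : X), G (i a * x) = a * G x)
    (hG2 : ∀ (x : X) (a : A), G (x * i a) = G x * a)
    (hG3 : ∀ a : A, G (i a) = a)
    (Φ : X ≃ₐ[R] X) (hΦa : ∀ a : A, Φ (i a) = i (E a + F a - a))
    (hΦp : Φ p = q) (hΦq : Φ q = p) :
    (∀ x : X, G (Φ x) = E (G x) + F (G x) - G x) ↔
      E (G p) + F (G p) - G p = 1 - G p :=
  stmt13_general i j h1 p q hp hq E F G hG1 hG3 Φ hΦa hΦp hΦq
end

section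
/- Every morphism from a blend to an alloy is an isomorphism: if (A,B,i₁,j₁,X₁) is a unital blend, (A,B,i₂,j₂,X₂) is a unital alloy, and φ : X₁ → X₂ is an algebra homomorphism with φ∘i₁ = i₂ and φ∘j₁ = j₂, then φ restricted to X₁ is bijective onto X₂. -/
open TensorProduct

theorem stmt14 {R A B X₁ X₂ : Type*} [CommRing R] [Ring A] [Ring B] [Ring X₁] [Ring X₂]
    [Algebra R A] [Algebra R B] [Algebra R X₁] [Algebra R X₂]
    (i₁ : A →ₐ[R] X₁) (j₁ : B →ₐ[R] X₁) (i₂ : A →ₐ[R] X₂) (j₂ : B →ₐ[R] X₂)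
    (hb1 : Function.Surjective (blendMul R i₁ j₁))
    (hb2 : Function.Surjective (blendMul R j₁ i₁))
    (ha1 : Function.Bijective (blendMul R i₂ j₂))
    (ha2 : Function.Bijective (blendMul R j₂ i₂))
    (φ : X₁ →ₐ[R] X₂) (hφi : φ.comp i₁ = i₂) (hφj : φ.comp j₁ = j₂) :
    Function.Bijective φ := by
  have key : φ.toLinearMap ∘ₗ blendMul R i₁ j₁ = blendMul R i₂ j₂ := by
    ext a b
    simp [blendMul, ← hφi, ← hφj]
  constructor
  · intro x y hxy
    obtain ⟨t, rfl⟩ := hb1 x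
    obtain ⟨s, rfl⟩ := hb1 y
    have : blendMul R i₂ j₂ t = blendMul R i₂ j₂ s := by
      rw [← key]; exact hxy
    rw [ha1.1 this]
  · intro y
    obtain ⟨t, rfl⟩ := ha1.2 y
    exact ⟨blendMul R i₁ j₁ t, congrFun (congrArg DFunLike.coe key) t⟩
end

section
/- In a unital strict C*-alloy (A, ℂ², X), for c = ap + bq one has c* = (E(a*) + E⊥(b*))p + (F⊥(a*) + F(b*))q. -/
open TensorProduct

theorem stmt15 {A X : Type*}
    [NormedRing A] [StarRing A] [CStarRing A] [NormedAlgebra ℂ A] [CompleteSpace A]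
    [StarModule ℂ A]
    [NormedRing X] [StarRing X] [CStarRing X] [NormedAlgebra ℂ X] [CompleteSpace X]
    [StarModule ℂ X]
    (i : A →⋆ₐ[ℂ] X) (hi : Function.Injective i) (j : (ℂ × ℂ) →ₐ[ℂ] X)
    (h1 : Function.Bijective (blendMul ℂ i.toAlgHom j))
    (h2 : Function.Bijective (blendMul ℂ j i.toAlgHom))
    (p q : X) (hp : p = j (1, 0)) (hq : q = j (0, 1))
    (hps : star p = p) (hqs : star q = q)
    (E F : A →ₗ[ℂ] A)
    (hE : ∀ a : A, p * i a * p = i (E a) * p)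
    (hF : ∀ a : A, q * i a * q = i (F a) * q) :
    ∀ a b : A,
      star (i a * p + i b * q) =
        i (E (star a) + (star b - E (star b))) * p +
          i ((star a - F (star a)) + F (star b)) * q := by
  intro a b
  have hone : p + q = 1 := by
    rw [hp, hq, ← map_add,
      show ((1:ℂ),(0:ℂ)) + ((0:ℂ),(1:ℂ)) = 1 from by simp [Prod.ext_iff], map_one]
  have hp1 : p = 1 - q := by rw [← hone]; abel
  have hq1 : q = 1 - p := by rw [← hone]; abel
  have lhs : star (i a * p + i b * q) = p * i (star a) + q * i (star b) := by
    rw [star_add, star_mul, star_mul, hps, hqs, ← map_star, ← map_star]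
  have e1 : p * i (star a)
      = i (E (star a)) * p + (i (star a) * q - i (F (star a)) * q) := by
    calc p * i (star a) = p * i (star a) * p + p * i (star a) * q := by
          rw [← mul_add, hone, mul_one]
      _ = i (E (star a)) * p + (1 - q) * i (star a) * q := by rw [hE, ← hp1]
      _ = _ := by rw [sub_mul, sub_mul, one_mul, hF]
  have e2 : q * i (star b)
      = (i (star b) * p - i (E (star b)) * p) + i (F (star b)) * q := by
    calc q * i (star b) = q * i (star b) * p + q * i (star b) * q := by
          rw [← mul_add, hone, mul_one]
      _ = (1 - p) * i (star b) * p + i (F (star b)) * q := by rw [hF, ← hq1]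
      _ = _ := by rw [sub_mul, sub_mul, one_mul, hE]
  rw [lhs, e1, e2, map_add, map_add, map_sub, map_sub, add_mul, add_mul, sub_mul, sub_mul]
  abel
end

section
/- In a unital strict C*-alloy (A, ℂ², X), there exists a constant K > 0 such that for all a ∈ A: ‖ap‖ ≥ K‖a‖, ‖aq‖ ≥ K‖a‖, ‖E(a*a)‖ ≥ K²‖a‖², and ‖F(a*a)‖ ≥ K²‖a‖². -/
/-!
Unique decomposition `X = Ap ⊕ Aq` makes `a ↦ i a * p` an injective bounded operator whose range
is the closed right annihilator `{c | c * q = 0}`, so by the open mapping theorem it is bounded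
below. The C⋆-identity `‖i a * p‖² = ‖p * i (a⋆a) * p‖ = ‖i (E (a⋆a)) * p‖ ≤ ‖E (a⋆a)‖`
transfers the bound to `E`; the same argument with `p` and `q` exchanged handles `F`.
-/

open TensorProduct

open Function

theorem bijective_add_mul_of_bijective_blendMul {R A X : Type*} [CommRing R] [Ring A] [Ring X]
    [Algebra R A] [Algebra R X] (i : A →ₐ[R] X) (j : R × R →ₐ[R] X)
    (h : Bijective (blendMul R i j)) :
    Bijective fun ab : A × A => i ab.1 * j (1, 0) + i ab.2 * j (0, 1) := by
  let e : A ⊗[R] (R × R) ≃ₗ[R] A × A :=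
    prodRight R R A R R ≪≫ₗ (TensorProduct.rid R A).prodCongr (TensorProduct.rid R A)
  have hblend (t : A ⊗[R] (R × R)) :
      blendMul R i j t = i (e t).1 * j (1, 0) + i (e t).2 * j (0, 1) := by
    induction t using TensorProduct.induction_on with
    | zero => simp
    | tmul a b =>
      have hjb : j b = b.1 • j (1, 0) + b.2 • j (0, 1) := by
        rw [← map_smul, ← map_smul, ← map_add]
        congr 1
        ext <;> simp
      simp [e, blendMul, hjb, mul_add]
    | add s t hs ht => simp only [map_add, hs, ht, Prod.fst_add, Prod.snd_add, add_mul]; abel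
  convert h.comp e.symm.bijective using 1
  funext ab
  simp [hblend]

theorem Function.Bijective.add_mul_swap {A X : Type*} [NonUnitalNonAssocSemiring X] {i : A → X}
    {p q : X} (hS : Bijective fun ab : A × A => i ab.1 * p + i ab.2 * q) :
    Bijective fun ab : A × A => i ab.1 * q + i ab.2 * p := by
  convert hS.comp Prod.swap_bijective using 1
  funext ab
  simp [add_comm]

section Decomposition

variable {A X F : Type*} [AddZeroClass A] [Semiring X] [FunLike F A X] [ZeroHomClass F A X]
  {i : F} {p q : X}

theorem injective_mul_right_of_bijective_add_mul
    (hS : Bijective fun ab : A × A => i ab.1 * p + i ab.2 * q) :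
    Injective fun a => i a * p := by
  intro a a' h
  simpa using hS.injective (a₁ := (a, 0)) (a₂ := (a', 0)) (by simpa using h)

theorem range_mul_right_of_bijective_add_mul
    (hS : Bijective fun ab : A × A => i ab.1 * p + i ab.2 * q) (hpq : p * q = 0)
    (hqq : q * q = q) :
    Set.range (fun a => i a * p) = {c | c * q = 0} := by
  ext c
  constructor
  · rintro ⟨a, rfl⟩
    simp [mul_assoc, hpq]
  · intro hc
    obtain ⟨⟨a, b⟩, rfl⟩ := hS.surjective c
    have hb : b = 0 := by
      have : i b * q = 0 := by simpa [add_mul, mul_assoc, hpq, hqq] using hc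
      simpa using hS.injective (a₁ := (0, b)) (a₂ := (0, 0)) (by simpa using this)
    exact ⟨a, by simp [hb]⟩

end Decomposition

theorem ContinuousLinearMap.exists_pos_mul_norm_le_of_range_eq_annihilator {𝕜 E X : Type*}
    [NontriviallyNormedField 𝕜] [NormedAddCommGroup E] [NormedSpace 𝕜 E] [CompleteSpace E]
    [NormedRing X] [NormedAlgebra 𝕜 X] [CompleteSpace X] (T : E →L[𝕜] X) (hT : Injective T)
    {q : X} (hrange : Set.range T = {c | c * q = 0}) :
    ∃ c > 0, ∀ x, c * ‖x‖ ≤ ‖T x‖ := by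
  have hclosed : IsClosed (Set.range T) := by
    rw [hrange]
    exact isClosed_eq (continuous_mul_const q) continuous_const
  exact antilipschitzWith_iff_exists_mul_le_norm.mp
    (T.antilipschitz_of_injective_of_isClosed_range hT hclosed)

section CStar

variable {A X : Type*} [CStarAlgebra A] [CStarAlgebra X] (i : A →⋆ₐ[ℂ] X) {p : X}

open scoped CStarAlgebra in
theorem exists_pos_mul_norm_le_norm_mul_right {q : X}
    (hS : Bijective fun ab : A × A => i ab.1 * p + i ab.2 * q) (hpq : p * q = 0)
    (hqq : q * q = q) :
    ∃ c > 0, ∀ a, c * ‖a‖ ≤ ‖i a * p‖ :=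
  ((ContinuousLinearMap.mul ℂ X).flip p ∘L ⟨i.toLinearMap, map_continuous i⟩)
    |>.exists_pos_mul_norm_le_of_range_eq_annihilator
      (injective_mul_right_of_bijective_add_mul hS)
      (range_mul_right_of_bijective_add_mul hS hpq hqq)

theorem sq_norm_mul_le_norm_compression (hp : IsStarProjection p) {E : A → A}
    (hE : ∀ a, p * i a * p = i (E a) * p) (a : A) :
    ‖i a * p‖ ^ 2 ≤ ‖E (star a * a)‖ := by
  have hcompress : star (i a * p) * (i a * p) = i (E (star a * a)) * p := by
    rw [star_mul, hp.isSelfAdjoint.star_eq, ← map_star, ← hE, map_mul]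
    noncomm_ring
  calc ‖i a * p‖ ^ 2 = ‖i (E (star a * a)) * p‖ := by
        rw [← hcompress, CStarRing.norm_star_mul_self, sq]
    _ ≤ ‖i (E (star a * a))‖ * ‖p‖ := norm_mul_le _ _
    _ ≤ ‖E (star a * a)‖ * 1 := by
        gcongr
        · exact NonUnitalStarAlgHom.norm_apply_le i _
        · exact hp.norm_le
    _ = ‖E (star a * a)‖ := mul_one _

theorem sq_mul_sq_le_norm_compression (hp : IsStarProjection p) {E : A → A}
    (hE : ∀ a, p * i a * p = i (E a) * p) {K : ℝ} (hK : 0 ≤ K) {a : A}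
    (ha : K * ‖a‖ ≤ ‖i a * p‖) :
    K ^ 2 * ‖a‖ ^ 2 ≤ ‖E (star a * a)‖ :=
  calc K ^ 2 * ‖a‖ ^ 2 = (K * ‖a‖) ^ 2 := by ring
    _ ≤ ‖i a * p‖ ^ 2 := by gcongr
    _ ≤ ‖E (star a * a)‖ := sq_norm_mul_le_norm_compression i hp hE a

end CStar

theorem stmt17_general {A X : Type*}
    [NormedRing A] [StarRing A] [CStarRing A] [NormedAlgebra ℂ A] [CompleteSpace A]
    [StarModule ℂ A]
    [NormedRing X] [StarRing X] [CStarRing X] [NormedAlgebra ℂ X] [CompleteSpace X]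
    [StarModule ℂ X]
    (i : A →⋆ₐ[ℂ] X) (j : (ℂ × ℂ) →ₐ[ℂ] X)
    (h1 : Function.Bijective (blendMul ℂ i.toAlgHom j))
    (p q : X) (hp : p = j (1, 0)) (hq : q = j (0, 1))
    (hps : star p = p) (hqs : star q = q)
    (E F : A →ₗ[ℂ] A)
    (hE : ∀ a : A, p * i a * p = i (E a) * p)
    (hF : ∀ a : A, q * i a * q = i (F a) * q) :
    ∃ K > (0 : ℝ), ∀ a : A,
      K * ‖a‖ ≤ ‖i a * p‖ ∧ K * ‖a‖ ≤ ‖i a * q‖ ∧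
      K ^ 2 * ‖a‖ ^ 2 ≤ ‖E (star a * a)‖ ∧ K ^ 2 * ‖a‖ ^ 2 ≤ ‖F (star a * a)‖ := by
  let : CStarAlgebra A := {}
  let : CStarAlgebra X := {}
  have hpp : p * p = p := by rw [hp, ← map_mul]; simp
  have hqq : q * q = q := by rw [hq, ← map_mul]; simp
  have hpq : p * q = 0 := by rw [hp, hq, ← map_mul, ← map_zero j]; congr 1; ext <;> simp
  have hqp : q * p = 0 := by rw [hp, hq, ← map_mul, ← map_zero j]; congr 1; ext <;> simp
  have hS : Bijective fun ab : A × A => i ab.1 * p + i ab.2 * q := by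
    subst hp hq
    exact bijective_add_mul_of_bijective_blendMul i.toAlgHom j h1
  obtain ⟨c₁, hc₁, hbound_p⟩ := exists_pos_mul_norm_le_norm_mul_right i hS hpq hqq
  obtain ⟨c₂, hc₂, hbound_q⟩ := exists_pos_mul_norm_le_norm_mul_right i hS.add_mul_swap hqp hpp
  refine ⟨min c₁ c₂, lt_min hc₁ hc₂, fun a => ?_⟩
  have hKp : min c₁ c₂ * ‖a‖ ≤ ‖i a * p‖ := by grw [min_le_left, hbound_p]
  have hKq : min c₁ c₂ * ‖a‖ ≤ ‖i a * q‖ := by grw [min_le_right, hbound_q]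
  have hK : 0 ≤ min c₁ c₂ := (lt_min hc₁ hc₂).le
  exact ⟨hKp, hKq, sq_mul_sq_le_norm_compression i ⟨hpp, hps⟩ hE hK hKp,
    sq_mul_sq_le_norm_compression i ⟨hqq, hqs⟩ hF hK hKq⟩

theorem stmt17 {A X : Type*}
    [NormedRing A] [StarRing A] [CStarRing A] [NormedAlgebra ℂ A] [CompleteSpace A]
    [StarModule ℂ A]
    [NormedRing X] [StarRing X] [CStarRing X] [NormedAlgebra ℂ X] [CompleteSpace X]
    [StarModule ℂ X]
    (i : A →⋆ₐ[ℂ] X) (hi : Function.Injective i) (j : (ℂ × ℂ) →ₐ[ℂ] X)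
    (h1 : Function.Bijective (blendMul ℂ i.toAlgHom j))
    (h2 : Function.Bijective (blendMul ℂ j i.toAlgHom))
    (p q : X) (hp : p = j (1, 0)) (hq : q = j (0, 1))
    (hps : star p = p) (hqs : star q = q)
    (E F : A →ₗ[ℂ] A)
    (hE : ∀ a : A, p * i a * p = i (E a) * p)
    (hF : ∀ a : A, q * i a * q = i (F a) * q) :
    ∃ K > (0 : ℝ), ∀ a : A,
      K * ‖a‖ ≤ ‖i a * p‖ ∧ K * ‖a‖ ≤ ‖i a * q‖ ∧
      K ^ 2 * ‖a‖ ^ 2 ≤ ‖E (star a * a)‖ ∧ K ^ 2 * ‖a‖ ^ 2 ≤ ‖F (star a * a)‖ :=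
  stmt17_general i j h1 p q hp hq hps hqs E F hE hF
end

section
/- In a unital strict C*-alloy (A, ℂ², X), the components of the left and right intrinsic pairs satisfy E★ = E*, F★ = F*, and the intrinsic automorphism satisfies φ⁻¹ = φ*, where f*(x) := f(x*)* for a linear map f. -/
open TensorProduct

theorem stmt18 {A X : Type*}
    [NormedRing A] [StarRing A] [CStarRing A] [NormedAlgebra ℂ A] [CompleteSpace A]
    [StarModule ℂ A]
    [NormedRing X] [StarRing X] [CStarRing X] [NormedAlgebra ℂ X] [CompleteSpace X]
    [StarModule ℂ X]
    (i : A →⋆ₐ[ℂ] X) (hi : Function.Injective i) (j : (ℂ × ℂ) →ₐ[ℂ] X)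
    (h1 : Function.Bijective (blendMul ℂ i.toAlgHom j))
    (h2 : Function.Bijective (blendMul ℂ j i.toAlgHom))
    (p q : X) (hp : p = j (1, 0)) (hq : q = j (0, 1))
    (hps : star p = p) (hqs : star q = q)
    (E F : A →ₗ[ℂ] A)
    (hE : ∀ a : A, p * i a * p = i (E a) * p)
    (hF : ∀ a : A, q * i a * q = i (F a) * q)
    (Es Fs : A →ₗ[ℂ] A)
    (hEs : ∀ a : A, p * i a * p = p * i (Es a))
    (hFs : ∀ a : A, q * i a * q = q * i (Fs a)) :
    (∀ a : A, Es a = star (E (star a))) ∧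
    (∀ a : A, Fs a = star (F (star a))) ∧
    (∀ a : A,
      E (star (E (star a) + F (star a) - star a)) +
        F (star (E (star a) + F (star a) - star a)) -
          star (E (star a) + F (star a) - star a) = a) ∧
    (∀ a : A, star (E (star (E a + F a - a)) + F (star (E a + F a - a)) -
      star (E a + F a - a)) = a) := by
  -- basic projection facts
  have hpp : p * p = p := by
    rw [hp, ← map_mul]; congr 1; simp [Prod.ext_iff]
  have hqq : q * q = q := by
    rw [hq, ← map_mul]; congr 1; simp [Prod.ext_iff]
  have hpq : p * q = 0 := by
    rw [hp, hq, ← map_mul, show ((1,0) : ℂ × ℂ) * (0,1) = 0 by simp [Prod.ext_iff], map_zero]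
  have hqp : q * p = 0 := by
    rw [hp, hq, ← map_mul, show ((0,1) : ℂ × ℂ) * (1,0) = 0 by simp [Prod.ext_iff], map_zero]
  have hpu : p + q = 1 := by
    rw [hp, hq, ← map_add, show ((1,0) : ℂ × ℂ) + (0,1) = 1 by simp [Prod.ext_iff], map_one]
  -- splitting lemmas
  have hsplitL1 : ∀ y : X, p * y = y - q * y := by
    intro y
    have h : p * y + q * y = y := by rw [← add_mul, hpu, one_mul]
    exact eq_sub_of_add_eq h
  have hsplitL2 : ∀ y : X, q * y = y - p * y := by
    intro y
    have h : q * y + p * y = y := by rw [← add_mul, add_comm, hpu, one_mul]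
    exact eq_sub_of_add_eq h
  have hsplitR1 : ∀ y : X, y * p = y - y * q := by
    intro y
    have h : y * p + y * q = y := by rw [← mul_add, hpu, mul_one]
    exact eq_sub_of_add_eq h
  have hsplitR2 : ∀ y : X, y * q = y - y * p := by
    intro y
    have h : y * q + y * p = y := by rw [← mul_add, add_comm, hpu, mul_one]
    exact eq_sub_of_add_eq h
  -- values of blendMul on pure tensors
  have bval1 : ∀ (x : A) (c : ℂ × ℂ), blendMul ℂ i.toAlgHom j (x ⊗ₜ[ℂ] c) = i x * j c := by
    intro x c; simp [blendMul, LinearMap.mul'_apply]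
  have bval2 : ∀ (c : ℂ × ℂ) (x : A), blendMul ℂ j i.toAlgHom (c ⊗ₜ[ℂ] x) = j c * i x := by
    intro c x; simp [blendMul, LinearMap.mul'_apply]
  -- cancellation lemmas
  have key1 : ∀ x y : A, i x * p = i y * p → x = y := by
    intro x y hxy
    have h' : x ⊗ₜ[ℂ] ((1,0) : ℂ × ℂ) = y ⊗ₜ[ℂ] ((1,0) : ℂ × ℂ) := by
      apply h1.injective
      rw [bval1, bval1, ← hp]
      exact hxy
    have h'' := congrArg (TensorProduct.map (LinearMap.id (R := ℂ) (M := A))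
      (LinearMap.fst ℂ ℂ ℂ)) h'
    have h''' := congrArg (TensorProduct.rid ℂ A) h''
    simpa using h'''
  have key2 : ∀ x y : A, i x * q = i y * q → x = y := by
    intro x y hxy
    have h' : x ⊗ₜ[ℂ] ((0,1) : ℂ × ℂ) = y ⊗ₜ[ℂ] ((0,1) : ℂ × ℂ) := by
      apply h1.injective
      rw [bval1, bval1, ← hq]
      exact hxy
    have h'' := congrArg (TensorProduct.map (LinearMap.id (R := ℂ) (M := A))
      (LinearMap.snd ℂ ℂ ℂ)) h'
    have h''' := congrArg (TensorProduct.rid ℂ A) h''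
    simpa using h'''
  have key3 : ∀ x y : A, p * i x = p * i y → x = y := by
    intro x y hxy
    have h' : ((1,0) : ℂ × ℂ) ⊗ₜ[ℂ] x = ((1,0) : ℂ × ℂ) ⊗ₜ[ℂ] y := by
      apply h2.injective
      rw [bval2, bval2, ← hp]
      exact hxy
    have h'' := congrArg (TensorProduct.map (LinearMap.fst ℂ ℂ ℂ)
      (LinearMap.id (R := ℂ) (M := A))) h'
    have h''' := congrArg (TensorProduct.lid ℂ A) h''
    simpa using h'''
  have key4 : ∀ x y : A, q * i x = q * i y → x = y := by
    intro x y hxy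
    have h' : ((0,1) : ℂ × ℂ) ⊗ₜ[ℂ] x = ((0,1) : ℂ × ℂ) ⊗ₜ[ℂ] y := by
      apply h2.injective
      rw [bval2, bval2, ← hq]
      exact hxy
    have h'' := congrArg (TensorProduct.map (LinearMap.snd ℂ ℂ ℂ)
      (LinearMap.id (R := ℂ) (M := A))) h'
    have h''' := congrArg (TensorProduct.lid ℂ A) h''
    simpa using h'''
  -- star relations
  have part1 : ∀ a : A, Es a = star (E (star a)) := by
    intro a
    apply key3
    rw [← hEs a]
    have h := congrArg star (hE (star a))
    rw [star_mul, star_mul, star_mul, hps, ← map_star, ← map_star, star_star] at h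
    rw [← mul_assoc] at h
    exact h
  have part2 : ∀ a : A, Fs a = star (F (star a)) := by
    intro a
    apply key4
    rw [← hFs a]
    have h := congrArg star (hF (star a))
    rw [star_mul, star_mul, star_mul, hqs, ← map_star, ← map_star, star_star] at h
    rw [← mul_assoc] at h
    exact h
  -- expansion of i on φ/ψ-type elements
  have expand : ∀ (u v w : A) (z : X),
      z * i (u + v - w) * z = z * i u * z + z * i v * z - z * i w * z := by
    intro u v w z
    rw [map_sub, map_add]
    noncomm_ring
  -- T1 : E (Es c + Fs c - c) = Fs c
  have T1 : ∀ c : A, E (Es c + Fs c - c) = Fs c := by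
    intro c
    apply key1
    rw [← hE, expand]
    have e1 : p * i (Es c) * p = p * i c * p := by
      rw [← hEs c, mul_assoc (p * i c) p p, hpp]
    have e0 : q * i (Fs c) * p = 0 := by
      rw [← hFs c, mul_assoc (q * i c) q p, hqp, mul_zero]
    have e2 : p * i (Fs c) * p = i (Fs c) * p := by
      rw [hsplitL1 (i (Fs c)), sub_mul, e0, sub_zero]
    rw [e1, e2]
    abel
  -- T2 : F (Es c + Fs c - c) = Es c
  have T2 : ∀ c : A, F (Es c + Fs c - c) = Es c := by
    intro c
    apply key2
    rw [← hF, expand]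
    have e1 : q * i (Fs c) * q = q * i c * q := by
      rw [← hFs c, mul_assoc (q * i c) q q, hqq]
    have e0 : p * i (Es c) * q = 0 := by
      rw [← hEs c, mul_assoc (p * i c) p q, hpq, mul_zero]
    have e2 : q * i (Es c) * q = i (Es c) * q := by
      rw [hsplitL2 (i (Es c)), sub_mul, e0, sub_zero]
    rw [e1, e2]
    abel
  -- T3 : Es (E c + F c - c) = F c
  have T3 : ∀ c : A, Es (E c + F c - c) = F c := by
    intro c
    apply key3
    rw [← hEs, expand]
    have e1 : p * i (E c) * p = p * i c * p := by
      rw [mul_assoc p (i (E c)) p, ← hE c, ← mul_assoc, ← mul_assoc, hpp]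
    have e0 : p * (i (F c) * q) = 0 := by
      rw [← hF c, ← mul_assoc, ← mul_assoc, hpq, zero_mul, zero_mul]
    have e2 : p * i (F c) * p = p * i (F c) := by
      rw [mul_assoc p (i (F c)) p, hsplitR1 (i (F c)), mul_sub, e0, sub_zero]
    rw [e1, e2]
    abel
  -- T4 : Fs (E c + F c - c) = E c
  have T4 : ∀ c : A, Fs (E c + F c - c) = E c := by
    intro c
    apply key4
    rw [← hFs, expand]
    have e1 : q * i (F c) * q = q * i c * q := by
      rw [mul_assoc q (i (F c)) q, ← hF c, ← mul_assoc, ← mul_assoc, hqq]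
    have e0 : q * (i (E c) * p) = 0 := by
      rw [← hE c, ← mul_assoc, ← mul_assoc, hqp, zero_mul, zero_mul]
    have e2 : q * i (E c) * q = q * i (E c) := by
      rw [mul_assoc q (i (E c)) q, hsplitR2 (i (E c)), mul_sub, e0, sub_zero]
    rw [e1, e2]
    abel
  refine ⟨part1, part2, ?_, ?_⟩
  · intro a
    have hs : star (E (star a) + F (star a) - star a) = Es a + Fs a - a := by
      rw [star_sub, star_add, star_star, ← part1 a, ← part2 a]
    rw [hs, T1 a, T2 a]
    abel
  · intro a
    rw [star_sub, star_add, star_star, ← part1 (E a + F a - a), ← part2 (E a + F a - a),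
      T3 a, T4 a]
    abel
end
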